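/- arXiv:2208.03014 — 8 statements merged into one kernel-verified Lean document; each statement's English description precedes it below -/
import Mathlib

section
/- For all nonnegative integers n and k with k ≤ n, the identity ∑_{j=0}^{n-k} C(2n+1, 2j) · C(n-j, k) = 4^{n-k} · C(2n-k, k) holds, where C denotes the binomial coefficient. -/
open Finset

def SA (n k : ℕ) : ℕ :=
  ∑ j ∈ Finset.range (n - k + 1), Nat.choose (2 * n + 1) (2 * j) * Nat.choose (n - j) k

def SB (n k : ℕ) : ℕ :=
  ∑ j ∈ Finset.range (n - k + 1), Nat.choose (2 * n + 1) (2 * j + 1) * Nat.choose (n - j) k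

lemma pascal (a b : ℕ) : (a + 1).choose (b + 1) = a.choose (b + 1) + a.choose b := by
  rw [Nat.choose_succ_succ]; simp [Nat.succ_eq_add_one]; omega

lemma chooseMM (M r : ℕ) :
    (M + 2).choose (r + 2) = M.choose r + 2 * M.choose (r + 1) + M.choose (r + 2) := by
  rw [pascal (M + 1) (r + 1), pascal M r, pascal M (r + 1)]
  ring

lemma sum_norm {m : ℕ} {f g : ℕ → ℕ} (h : ∀ i < m, f i = g i) :
    ∑ i ∈ range m, f i = ∑ i ∈ range m, g i :=
  Finset.sum_congr rfl fun i hi => h i (Finset.mem_range.mp hi)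

lemma auxA (m k : ℕ) :
    (∑ i ∈ range (m + 1),
        (2 * (k + m + 1) + 1).choose (2 * i + 2) * (k + m + 1 - i).choose (k + 1))
      + (k + m + 2).choose (k + 1)
    = SA (k + m + 1) (k + 1) + SA (k + m + 1) k := by
  have hR : (∑ j ∈ range (m + 2),
      (2 * (k + m + 1) + 1).choose (2 * j) * (k + m + 2 - j).choose (k + 1))
      = (∑ i ∈ range (m + 1),
          (2 * (k + m + 1) + 1).choose (2 * i + 2) * (k + m + 1 - i).choose (k + 1))
        + (k + m + 2).choose (k + 1) := by
    rw [Finset.sum_range_succ']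
    congr 1
    · apply sum_norm; intro i hi
      have h1 : 2 * (i + 1) = 2 * i + 2 := by ring
      have h2 : k + m + 2 - (i + 1) = k + m + 1 - i := by omega
      rw [h1, h2]
    · simp
  rw [← hR]
  have hP : (∑ j ∈ range (m + 2),
      (2 * (k + m + 1) + 1).choose (2 * j) * (k + m + 2 - j).choose (k + 1))
      = (∑ j ∈ range (m + 2),
          (2 * (k + m + 1) + 1).choose (2 * j) * (k + m + 1 - j).choose (k + 1))
        + ∑ j ∈ range (m + 2),
          (2 * (k + m + 1) + 1).choose (2 * j) * (k + m + 1 - j).choose k := by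
    rw [← Finset.sum_add_distrib]
    apply sum_norm; intro j hj
    have h2 : k + m + 2 - j = (k + m + 1 - j) + 1 := by omega
    rw [h2, pascal, Nat.mul_add]
  rw [hP]
  congr 1
  · rw [Finset.sum_range_succ]
    have hz : (k + m + 1 - (m + 1)).choose (k + 1) = 0 :=
      Nat.choose_eq_zero_of_lt (by omega)
    rw [hz, Nat.mul_zero, Nat.add_zero]
    unfold SA
    rw [show k + m + 1 - (k + 1) + 1 = m + 1 from by omega]
  · unfold SA
    rw [show k + m + 1 - k + 1 = m + 2 from by omega]

lemma auxB (m k : ℕ) :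
    (∑ i ∈ range (m + 1),
        (2 * (k + m + 1) + 1).choose (2 * i + 3) * (k + m + 1 - i).choose (k + 1))
      + (2 * (k + m + 1) + 1) * (k + m + 2).choose (k + 1)
    = SB (k + m + 1) (k + 1) + SB (k + m + 1) k := by
  have hR : (∑ j ∈ range (m + 2),
      (2 * (k + m + 1) + 1).choose (2 * j + 1) * (k + m + 2 - j).choose (k + 1))
      = (∑ i ∈ range (m + 1),
          (2 * (k + m + 1) + 1).choose (2 * i + 3) * (k + m + 1 - i).choose (k + 1))
        + (2 * (k + m + 1) + 1) * (k + m + 2).choose (k + 1) := by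
    rw [Finset.sum_range_succ']
    congr 1
    · apply sum_norm; intro i hi
      have h1 : 2 * (i + 1) + 1 = 2 * i + 3 := by ring
      have h2 : k + m + 2 - (i + 1) = k + m + 1 - i := by omega
      rw [h1, h2]
    · norm_num [Nat.choose_one_right]
  rw [← hR]
  have hP : (∑ j ∈ range (m + 2),
      (2 * (k + m + 1) + 1).choose (2 * j + 1) * (k + m + 2 - j).choose (k + 1))
      = (∑ j ∈ range (m + 2),
          (2 * (k + m + 1) + 1).choose (2 * j + 1) * (k + m + 1 - j).choose (k + 1))
        + ∑ j ∈ range (m + 2),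
          (2 * (k + m + 1) + 1).choose (2 * j + 1) * (k + m + 1 - j).choose k := by
    rw [← Finset.sum_add_distrib]
    apply sum_norm; intro j hj
    have h2 : k + m + 2 - j = (k + m + 1 - j) + 1 := by omega
    rw [h2, pascal (k + m + 1 - j) k, Nat.mul_add]
  rw [hP]
  congr 1
  · rw [Finset.sum_range_succ]
    have hz : (k + m + 1 - (m + 1)).choose (k + 1) = 0 :=
      Nat.choose_eq_zero_of_lt (by omega)
    rw [hz, Nat.mul_zero, Nat.add_zero]
    unfold SB
    rw [show k + m + 1 - (k + 1) + 1 = m + 1 from by omega]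
  · unfold SB
    rw [show k + m + 1 - k + 1 = m + 2 from by omega]

lemma recA (m k : ℕ) :
    SA (k + m + 2) (k + 1)
      = 2 * SA (k + m + 1) (k + 1) + SA (k + m + 1) k + 2 * SB (k + m + 1) (k + 1) := by
  have e0 : SA (k + m + 2) (k + 1)
      = ∑ j ∈ range (m + 2),
          (2 * (k + m + 2) + 1).choose (2 * j) * (k + m + 2 - j).choose (k + 1) := by
    unfold SA
    rw [show k + m + 2 - (k + 1) + 1 = m + 2 from by omega]
  rw [e0, Finset.sum_range_succ']
  have e1 : (∑ i ∈ range (m + 1),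
      (2 * (k + m + 2) + 1).choose (2 * (i + 1)) * (k + m + 2 - (i + 1)).choose (k + 1))
      = ∑ i ∈ range (m + 1),
          ((2 * (k + m + 1) + 1).choose (2 * i) * (k + m + 1 - i).choose (k + 1)
            + 2 * ((2 * (k + m + 1) + 1).choose (2 * i + 1) * (k + m + 1 - i).choose (k + 1))
            + (2 * (k + m + 1) + 1).choose (2 * i + 2) * (k + m + 1 - i).choose (k + 1)) := by
    apply sum_norm; intro i hi
    have h1 : 2 * (i + 1) = 2 * i + 2 := by ring
    have h2 : 2 * (k + m + 2) + 1 = (2 * (k + m + 1) + 1) + 2 := by ring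
    have h3 : k + m + 2 - (i + 1) = k + m + 1 - i := by omega
    rw [h1, h2, h3, chooseMM]
    ring
  rw [e1]
  simp only [Finset.sum_add_distrib, ← Finset.mul_sum]
  have hS1 : (∑ i ∈ range (m + 1),
      (2 * (k + m + 1) + 1).choose (2 * i) * (k + m + 1 - i).choose (k + 1))
      = SA (k + m + 1) (k + 1) := by
    unfold SA
    rw [show k + m + 1 - (k + 1) + 1 = m + 1 from by omega]
  have hS2 : (∑ i ∈ range (m + 1),
      (2 * (k + m + 1) + 1).choose (2 * i + 1) * (k + m + 1 - i).choose (k + 1))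
      = SB (k + m + 1) (k + 1) := by
    unfold SB
    rw [show k + m + 1 - (k + 1) + 1 = m + 1 from by omega]
  have hS3 := auxA m k
  have hF0 : (2 * (k + m + 2) + 1).choose (2 * 0) * (k + m + 2 - 0).choose (k + 1)
      = (k + m + 2).choose (k + 1) := by
    simp
  rw [hS1, hS2, hF0]
  omega

lemma recB (m k : ℕ) :
    SB (k + m + 2) (k + 1)
      = 2 * SB (k + m + 1) (k + 1) + SB (k + m + 1) k
        + 2 * SA (k + m + 1) (k + 1) + 2 * SA (k + m + 1) k := by
  have e0 : SB (k + m + 2) (k + 1)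
      = ∑ j ∈ range (m + 2),
          (2 * (k + m + 2) + 1).choose (2 * j + 1) * (k + m + 2 - j).choose (k + 1) := by
    unfold SB
    rw [show k + m + 2 - (k + 1) + 1 = m + 2 from by omega]
  rw [e0, Finset.sum_range_succ']
  have e1 : (∑ i ∈ range (m + 1),
      (2 * (k + m + 2) + 1).choose (2 * (i + 1) + 1) * (k + m + 2 - (i + 1)).choose (k + 1))
      = ∑ i ∈ range (m + 1),
          ((2 * (k + m + 1) + 1).choose (2 * i + 1) * (k + m + 1 - i).choose (k + 1)
            + 2 * ((2 * (k + m + 1) + 1).choose (2 * i + 2) * (k + m + 1 - i).choose (k + 1))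
            + (2 * (k + m + 1) + 1).choose (2 * i + 3) * (k + m + 1 - i).choose (k + 1)) := by
    apply sum_norm; intro i hi
    have h1 : 2 * (i + 1) + 1 = (2 * i + 1) + 2 := by ring
    have h2 : 2 * (k + m + 2) + 1 = (2 * (k + m + 1) + 1) + 2 := by ring
    have h3 : k + m + 2 - (i + 1) = k + m + 1 - i := by omega
    have h4 : 2 * i + 1 + 1 = 2 * i + 2 := by ring
    have h5 : 2 * i + 1 + 2 = 2 * i + 3 := by ring
    rw [h1, h2, h3, chooseMM, h4, h5]
    ring
  rw [e1]
  simp only [Finset.sum_add_distrib, ← Finset.mul_sum]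
  have hS1 : (∑ i ∈ range (m + 1),
      (2 * (k + m + 1) + 1).choose (2 * i + 1) * (k + m + 1 - i).choose (k + 1))
      = SB (k + m + 1) (k + 1) := by
    unfold SB
    rw [show k + m + 1 - (k + 1) + 1 = m + 1 from by omega]
  have hS2 := auxA m k
  have hS3 := auxB m k
  have hF0 : (2 * (k + m + 2) + 1).choose (2 * 0 + 1) * (k + m + 2 - 0).choose (k + 1)
      = (2 * (k + m + 1) + 1) * (k + m + 2).choose (k + 1)
        + 2 * (k + m + 2).choose (k + 1) := by
    simp only [Nat.mul_zero, Nat.zero_add, Nat.choose_one_right, Nat.sub_zero]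
    ring
  rw [hS1, hF0]
  omega

lemma SA0_eq (n : ℕ) : SA n 0 = ∑ j ∈ range (n + 1), (2 * n + 1).choose (2 * j) := by
  unfold SA
  rw [show n - 0 + 1 = n + 1 from by omega]
  apply sum_norm; intro j hj
  rw [Nat.choose_zero_right, Nat.mul_one]

lemma SB0_eq (n : ℕ) : SB n 0 = ∑ j ∈ range (n + 1), (2 * n + 1).choose (2 * j + 1) := by
  unfold SB
  rw [show n - 0 + 1 = n + 1 from by omega]
  apply sum_norm; intro j hj
  rw [Nat.choose_zero_right, Nat.mul_one]

lemma auxA0 (n : ℕ) :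
    (∑ i ∈ range (n + 1), (2 * n + 1).choose (2 * i + 2)) + 1 = SA n 0 := by
  have hR : (∑ j ∈ range (n + 2), (2 * n + 1).choose (2 * j))
      = (∑ i ∈ range (n + 1), (2 * n + 1).choose (2 * i + 2)) + 1 := by
    rw [Finset.sum_range_succ']
    rfl
  rw [← hR, Finset.sum_range_succ, SA0_eq,
    Nat.choose_eq_zero_of_lt (show 2 * n + 1 < 2 * (n + 1) from by omega), Nat.add_zero]

lemma auxB0 (n : ℕ) :
    (∑ i ∈ range (n + 1), (2 * n + 1).choose (2 * i + 3)) + (2 * n + 1) = SB n 0 := by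
  have hR : (∑ j ∈ range (n + 2), (2 * n + 1).choose (2 * j + 1))
      = (∑ i ∈ range (n + 1), (2 * n + 1).choose (2 * i + 3)) + (2 * n + 1) := by
    rw [Finset.sum_range_succ']
    congr 1
    rw [show 2 * 0 + 1 = 1 from by ring, Nat.choose_one_right]
  rw [← hR, Finset.sum_range_succ, SB0_eq,
    Nat.choose_eq_zero_of_lt (show 2 * n + 1 < 2 * (n + 1) + 1 from by omega), Nat.add_zero]

lemma recA0 (n : ℕ) : SA (n + 1) 0 = 2 * SA n 0 + 2 * SB n 0 := by
  rw [SA0_eq (n + 1), Finset.sum_range_succ']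
  have e1 : (∑ i ∈ range (n + 1), (2 * (n + 1) + 1).choose (2 * (i + 1)))
      = ∑ i ∈ range (n + 1),
          ((2 * n + 1).choose (2 * i) + 2 * (2 * n + 1).choose (2 * i + 1)
            + (2 * n + 1).choose (2 * i + 2)) := by
    apply sum_norm; intro i hi
    rw [show 2 * (i + 1) = 2 * i + 2 from by ring,
      show 2 * (n + 1) + 1 = (2 * n + 1) + 2 from by ring, chooseMM]
  rw [e1]
  simp only [Finset.sum_add_distrib, ← Finset.mul_sum]
  have h1 := auxA0 n
  rw [← SA0_eq, ← SB0_eq]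
  simp only [Nat.mul_zero, Nat.choose_zero_right]
  omega

lemma recB0 (n : ℕ) : SB (n + 1) 0 = 2 * SB n 0 + 2 * SA n 0 := by
  rw [SB0_eq (n + 1), Finset.sum_range_succ']
  have e1 : (∑ i ∈ range (n + 1), (2 * (n + 1) + 1).choose (2 * (i + 1) + 1))
      = ∑ i ∈ range (n + 1),
          ((2 * n + 1).choose (2 * i + 1) + 2 * (2 * n + 1).choose (2 * i + 2)
            + (2 * n + 1).choose (2 * i + 3)) := by
    apply sum_norm; intro i hi
    rw [show 2 * (i + 1) + 1 = (2 * i + 1) + 2 from by ring,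
      show 2 * (n + 1) + 1 = (2 * n + 1) + 2 from by ring, chooseMM,
      show 2 * i + 1 + 1 = 2 * i + 2 from by ring,
      show 2 * i + 1 + 2 = 2 * i + 3 from by ring]
  rw [e1]
  simp only [Finset.sum_add_distrib, ← Finset.mul_sum]
  have h1 := auxA0 n
  have h2 := auxB0 n
  rw [← SB0_eq]
  rw [show 2 * 0 + 1 = 1 from by ring, Nat.choose_one_right]
  omega

theorem key (n : ℕ) : ∀ k m : ℕ, n = k + m →
    SA n k = 4 ^ m * (k + 2 * m).choose k ∧
    SB n k + 4 ^ m * (k + 2 * m).choose k = 2 * (4 ^ m * (k + 2 * m + 1).choose k) := by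
  induction n with
  | zero =>
    intro k m h
    have hk : k = 0 := by omega
    have hm : m = 0 := by omega
    subst hk; subst hm
    constructor
    · show SA 0 0 = _
      decide
    · show SB 0 0 + _ = _
      decide
  | succ n ih =>
    intro k m h
    cases k with
    | zero =>
      have hm : m = n + 1 := by omega
      subst hm
      obtain ⟨ihA, ihB⟩ := ih 0 n (by omega)
      simp only [Nat.choose_zero_right, Nat.mul_one] at ihA ihB ⊢
      have h4 : (4 : ℕ) ^ (n + 1) = 4 * 4 ^ n := by rw [pow_succ]; ring
      constructor
      · rw [recA0]; omega
      · rw [recB0]; omega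
    | succ k =>
      cases m with
      | zero =>
        have hnk : n = k := by omega
        subst hnk
        have SA_val : SA (n + 1) (n + 1) = 1 := by
          unfold SA
          rw [show n + 1 - (n + 1) + 1 = 1 from by omega, Finset.sum_range_one]
          simp
        have SB_val : SB (n + 1) (n + 1) = 2 * (n + 1) + 1 := by
          unfold SB
          rw [show n + 1 - (n + 1) + 1 = 1 from by omega, Finset.sum_range_one]
          simp
        constructor
        · rw [SA_val]; simp
        · rw [SB_val, show n + 1 + 2 * 0 + 1 = (n + 1) + 1 from by ring,
            Nat.choose_succ_self_right, show n + 1 + 2 * 0 = n + 1 from by ring]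
          simp
          omega
      | succ m =>
        have hn : n = k + m + 1 := by omega
        subst hn
        obtain ⟨ihA1, ihB1⟩ := ih (k + 1) m (by ring)
        obtain ⟨ihA0, ihB0⟩ := ih k (m + 1) (by ring)
        rw [show k + 1 + 2 * m = k + 2 * m + 1 from by ring] at ihA1 ihB1
        rw [show k + 2 * m + 1 + 1 = k + 2 * m + 2 from by ring] at ihB1
        rw [show k + 2 * (m + 1) = k + 2 * m + 2 from by ring] at ihA0 ihB0
        rw [show k + 2 * m + 2 + 1 = k + 2 * m + 3 from by ring] at ihB0
        have ihA0' : SA (k + m + 1) k = 4 * (4 ^ m * (k + 2 * m + 2).choose k) := by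
          rw [ihA0, pow_succ]; ring
        have ihB0' : SB (k + m + 1) k + 4 * (4 ^ m * (k + 2 * m + 2).choose k)
            = 8 * (4 ^ m * (k + 2 * m + 3).choose k) := by
          rw [show (8 : ℕ) * (4 ^ m * (k + 2 * m + 3).choose k)
              = 2 * (4 ^ (m + 1) * (k + 2 * m + 3).choose k) from by rw [pow_succ]; ring,
            show (4 : ℕ) * (4 ^ m * (k + 2 * m + 2).choose k)
              = 4 ^ (m + 1) * (k + 2 * m + 2).choose k from by rw [pow_succ]; ring]
          exact ihB0
        have hp1 : (k + 2 * m + 3).choose (k + 1)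
            = (k + 2 * m + 2).choose (k + 1) + (k + 2 * m + 2).choose k := by
          rw [show k + 2 * m + 3 = (k + 2 * m + 2) + 1 from by ring, pascal]
        have hpe : 4 ^ m * (k + 2 * m + 3).choose (k + 1)
            = 4 ^ m * (k + 2 * m + 2).choose (k + 1) + 4 ^ m * (k + 2 * m + 2).choose k := by
          rw [hp1]; ring
        have hp2 : (k + 2 * m + 4).choose (k + 1)
            = (k + 2 * m + 3).choose (k + 1) + (k + 2 * m + 3).choose k := by
          rw [show k + 2 * m + 4 = (k + 2 * m + 3) + 1 from by ring, pascal]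
        have hpf : 4 ^ m * (k + 2 * m + 4).choose (k + 1)
            = 4 ^ m * (k + 2 * m + 3).choose (k + 1) + 4 ^ m * (k + 2 * m + 3).choose k := by
          rw [hp2]; ring
        have hg1 : (4 : ℕ) ^ (m + 1) * (k + 2 * m + 3).choose (k + 1)
            = 4 * (4 ^ m * (k + 2 * m + 3).choose (k + 1)) := by rw [pow_succ]; ring
        have hg2 : (4 : ℕ) ^ (m + 1) * (k + 2 * m + 4).choose (k + 1)
            = 4 * (4 ^ m * (k + 2 * m + 4).choose (k + 1)) := by rw [pow_succ]; ring
        constructor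
        · rw [show k + m + 1 + 1 = k + m + 2 from by ring, recA,
            show k + 1 + 2 * (m + 1) = k + 2 * m + 3 from by ring, hg1]
          omega
        · rw [show k + m + 1 + 1 = k + m + 2 from by ring, recB,
            show k + 1 + 2 * (m + 1) = k + 2 * m + 3 from by ring,
            show k + 2 * m + 3 + 1 = k + 2 * m + 4 from by ring, hg1, hg2]
          omega

theorem sum_choose_identity_Q (n k : ℕ) (hk : k ≤ n) :
    ∑ j ∈ Finset.range (n - k + 1), Nat.choose (2 * n + 1) (2 * j) * Nat.choose (n - j) k
      = 4 ^ (n - k) * Nat.choose (2 * n - k) k := by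
  have h := (key n k (n - k) (by omega)).1
  rw [show k + 2 * (n - k) = 2 * n - k from by omega] at h
  exact h
end

section
/- For all nonnegative integers n and k with k ≤ n, the identity ∑_{j=0}^{n-k} C(2n+2, 2j+1) · C(n-j, k) = 2 · 4^{n-k} · C(2n-k+1, k) holds, where C denotes the binomial coefficient. -/
open Finset

private def BB (m k : ℕ) : ℕ := ∑ s ∈ range (m + 1), Nat.choose m (2 * s + 1) * Nat.choose s k

lemma Bstab (m k N : ℕ) (h : m + 1 ≤ N) :
    ∑ s ∈ range N, Nat.choose m (2 * s + 1) * Nat.choose s k = BB m k := by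
  rw [BB]
  refine (Finset.sum_subset (Finset.range_subset_range.2 h) (fun s _ hs => ?_)).symm
  rw [Finset.mem_range, not_lt] at hs
  rw [Nat.choose_eq_zero_of_lt (by omega), zero_mul]

lemma Bvanish (m k : ℕ) (h : m ≤ 2 * k) : BB m k = 0 := by
  rw [BB]
  refine Finset.sum_eq_zero fun s _ => ?_
  rcases lt_or_ge s k with hs | hs
  · rw [Nat.choose_eq_zero_of_lt hs, mul_zero]
  · rw [Nat.choose_eq_zero_of_lt (by omega), zero_mul]

lemma Brec (m k : ℕ) : BB (m + 2) (k + 1) = 2 * BB (m + 1) (k + 1) + BB m k := by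
  have key : ∑ t ∈ range (m + 2), Nat.choose m (2 * t + 2) * (Nat.choose t k + Nat.choose t (k+1))
      = ∑ t ∈ range (m + 2), Nat.choose m (2 * t) * Nat.choose t (k + 1) := by
    rw [Finset.sum_range_succ' (fun t => Nat.choose m (2 * t) * Nat.choose t (k+1)) (m+1)]
    rw [Nat.choose_zero_right, Nat.choose_eq_zero_of_lt (Nat.succ_pos k), mul_zero, add_zero]
    rw [Finset.sum_range_succ]
    rw [Nat.choose_eq_zero_of_lt (by omega), zero_mul, add_zero]
    refine Finset.sum_congr rfl fun t _ => ?_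
    have h1 : 2 * (t + 1) = 2 * t + 2 := by ring
    rw [h1, Nat.choose_succ_succ, mul_add]
  -- expand B (m+2) (k+1)
  have e1 : BB (m + 2) (k + 1)
      = (∑ t ∈ range (m + 2), Nat.choose (m+1) (2*t+2) * Nat.choose (t+1) (k+1))
        + BB (m + 1) (k + 1) := by
    rw [BB]
    have : ∀ s, Nat.choose (m+2) (2*s+1) = Nat.choose (m+1) (2*s) + Nat.choose (m+1) (2*s+1) := by
      intro s; exact Nat.choose_succ_succ (m+1) (2*s)
    simp only [this, add_mul, Finset.sum_add_distrib]
    congr 1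
    · rw [Finset.sum_range_succ' (fun s => Nat.choose (m+1) (2*s) * Nat.choose s (k+1)) (m+2)]
      rw [Nat.choose_zero_right, Nat.choose_eq_zero_of_lt (Nat.succ_pos k), mul_zero, add_zero]
      refine Finset.sum_congr rfl fun t _ => ?_
      have h1 : 2 * (t + 1) = 2 * t + 2 := by ring
      rw [h1]
    · exact Bstab (m+1) (k+1) (m+3) (by omega)
  rw [e1]
  have e2 : ∑ t ∈ range (m + 2), Nat.choose (m+1) (2*t+2) * Nat.choose (t+1) (k+1)
      = BB (m + 1) (k + 1) + BB m k := by
    have expand : ∀ t, Nat.choose (m+1) (2*t+2) * Nat.choose (t+1) (k+1)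
        = Nat.choose m (2*t+1) * Nat.choose t k
          + Nat.choose m (2*t+1) * Nat.choose t (k+1)
          + (Nat.choose m (2*t+2) * (Nat.choose t k + Nat.choose t (k+1))) := by
      intro t
      rw [Nat.choose_succ_succ m (2*t+1), Nat.choose_succ_succ t k]
      ring
    simp only [expand, Finset.sum_add_distrib, key]
    have e3 : BB (m + 1) (k + 1)
        = ∑ t ∈ range (m+2), (Nat.choose m (2*t) + Nat.choose m (2*t+1)) * Nat.choose t (k+1) := by
      rw [BB]
      refine Finset.sum_congr rfl fun t _ => ?_
      rw [Nat.choose_succ_succ m (2*t)]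
    have e4 : BB m k = ∑ t ∈ range (m+2), Nat.choose m (2*t+1) * Nat.choose t k :=
      (Bstab m k (m+2) (by omega)).symm
    rw [e3, e4]
    simp only [add_mul, Finset.sum_add_distrib]
    ring
  rw [e2]; ring

-- odd and even half sums
lemma oddeven (d : ℕ) :
    (∑ s ∈ range (d + 2), Nat.choose (d+1) (2*s+1)) = 2^d ∧
    (∑ s ∈ range (d + 2), Nat.choose (d+1) (2*s)) = 2^d := by
  induction d with
  | zero => constructor <;> decide
  | succ d ih =>
    obtain ⟨ho, he⟩ := ih
    have stabo : ∑ s ∈ range (d + 3), Nat.choose (d+1) (2*s+1)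
        = ∑ s ∈ range (d + 2), Nat.choose (d+1) (2*s+1) := by
      rw [Finset.sum_range_succ, Nat.choose_eq_zero_of_lt (by omega), add_zero]
    have stabe : ∑ s ∈ range (d + 3), Nat.choose (d+1) (2*s)
        = ∑ s ∈ range (d + 2), Nat.choose (d+1) (2*s) := by
      rw [Finset.sum_range_succ, Nat.choose_eq_zero_of_lt (by omega), add_zero]
    constructor
    · have : ∑ s ∈ range (d + 3), Nat.choose (d+2) (2*s+1)
          = ∑ s ∈ range (d + 3), (Nat.choose (d+1) (2*s) + Nat.choose (d+1) (2*s+1)) := by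
        refine Finset.sum_congr rfl fun s _ => Nat.choose_succ_succ (d+1) (2*s)
      rw [this, Finset.sum_add_distrib, stabo, stabe, ho, he]; ring
    · -- even: peel s=0
      rw [Finset.sum_range_succ' (fun s => Nat.choose (d+2) (2*s)) (d+2)]
      have : ∑ s ∈ range (d + 2), Nat.choose (d+2) (2*(s+1))
          = ∑ s ∈ range (d + 2), (Nat.choose (d+1) (2*s+1) + Nat.choose (d+1) (2*s+2)) := by
        refine Finset.sum_congr rfl fun s _ => ?_
        have h1 : 2*(s+1) = 2*s+1+1 := by ring
        rw [h1, Nat.choose_succ_succ (d+1) (2*s+1)]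
      rw [this, Finset.sum_add_distrib, ho]
      -- ∑ C(d+1, 2s+2) = even sum minus first term
      have : ∑ s ∈ range (d + 2), Nat.choose (d+1) (2*s+2)
          = 2^d - 1 := by
        have := Finset.sum_range_succ' (fun s => Nat.choose (d+1) (2*s)) (d+2)
        rw [stabe, he] at this
        simp only [mul_zero, Nat.choose_zero_right] at this
        have h2 : ∀ s:ℕ, 2*(s+1) = 2*s+2 := fun s => by ring
        simp only [h2] at this
        omega
      rw [this]
      have h3 : 1 ≤ 2^d := Nat.one_le_two_pow
      have h4 : (2:ℕ)^(d+1) = 2^d + 2^d := by ring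
      simp only [mul_zero, Nat.choose_zero_right]
      omega

lemma Bmain : ∀ k d, BB (2*k+1+d) k = 2^d * Nat.choose (k+d) k := by
  intro k
  induction k with
  | zero =>
    intro d
    have h0 : 2*0+1+d = d+1 := by omega
    rw [h0]
    have := (oddeven d).1
    simp only [BB, Nat.choose_zero_right, mul_one, Nat.zero_add]
    exact this
  | succ k ih =>
    intro d
    induction d with
    | zero =>
      have h1 : 2*(k+1)+1+0 = (2*k+1)+2 := by ring
      rw [h1, Brec, Bvanish (2*k+2) (k+1) (by omega), mul_zero, zero_add]
      have := ih 0
      have h2 : 2*k+1+0 = 2*k+1 := by ring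
      rw [h2] at this
      rw [this]
      simp
    | succ d ihd =>
      have h1 : 2*(k+1)+1+(d+1) = (2*k+2+d)+2 := by ring
      rw [h1, Brec]
      have hA : BB (2*k+2+d+1) (k+1) = 2^d * Nat.choose (k+1+d) (k+1) := by
        rw [show 2*k+2+d+1 = 2*(k+1)+1+d by ring]; exact ihd
      have hB2 : BB (2*k+2+d) k = 2^(d+1) * Nat.choose (k+(d+1)) k := by
        rw [show 2*k+2+d = 2*k+1+(d+1) by ring]; exact ih (d+1)
      rw [hA, hB2, show k+1+(d+1) = (k+1+d)+1 by ring, Nat.choose_succ_succ (k+1+d) (k),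
        show k+(d+1) = k+1+d by ring]
      ring

theorem sum_choose_identity_R (n k : ℕ) (hk : k ≤ n) :
    ∑ j ∈ Finset.range (n - k + 1), Nat.choose (2 * n + 2) (2 * j + 1) * Nat.choose (n - j) k
      = 2 * 4 ^ (n - k) * Nat.choose (2 * n - k + 1) k := by
  -- extend range to n+1
  have ext : ∑ j ∈ Finset.range (n - k + 1), Nat.choose (2 * n + 2) (2 * j + 1) * Nat.choose (n - j) k
      = ∑ j ∈ Finset.range (n + 1), Nat.choose (2 * n + 2) (2 * j + 1) * Nat.choose (n - j) k := by
    refine Finset.sum_subset (Finset.range_subset_range.2 (by omega)) (fun j hjm hj => ?_)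
    rw [Finset.mem_range, not_lt] at hj
    rw [Finset.mem_range] at hjm
    rw [Nat.choose_eq_zero_of_lt (show n - j < k by omega), mul_zero]
  rw [ext]
  have hrefl := Finset.sum_range_reflect
    (fun j => Nat.choose (2 * n + 2) (2 * j + 1) * Nat.choose (n - j) k) (n+1)
  rw [← hrefl]
  have congr1 : ∑ j ∈ Finset.range (n+1),
      Nat.choose (2*n+2) (2*(n+1-1-j)+1) * Nat.choose (n - (n+1-1-j)) k
      = ∑ j ∈ Finset.range (n+1), Nat.choose (2*n+2) (2*j+1) * Nat.choose j k := by
    refine Finset.sum_congr rfl fun j hj => ?_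
    rw [Finset.mem_range] at hj
    have hj' : j ≤ n := by omega
    have h1 : n + 1 - 1 - j = n - j := by omega
    rw [h1]
    have h2 : n - (n - j) = j := by omega
    rw [h2]
    have h3 : 2 * (n - j) + 1 = (2*n+2) - (2*j+1) := by omega
    rw [h3, Nat.choose_symm (by omega)]
  rw [congr1]
  have toB : ∑ j ∈ Finset.range (n+1), Nat.choose (2*n+2) (2*j+1) * Nat.choose j k
      = BB (2*n+2) k := by
    rw [BB]
    refine Finset.sum_subset (Finset.range_subset_range.2 (by omega)) (fun s _ hs => ?_)
    rw [Finset.mem_range, not_lt] at hs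
    rw [Nat.choose_eq_zero_of_lt (by omega), zero_mul]
  rw [toB]
  have hm : 2*n+2 = 2*k+1+(2*(n-k)+1) := by omega
  rw [hm, Bmain k (2*(n-k)+1)]
  have h1 : k + (2*(n-k)+1) = 2*n-k+1 := by omega
  rw [h1]
  have h2 : (2:ℕ)^(2*(n-k)+1) = 2 * 4^(n-k) := by
    rw [pow_succ, pow_mul]
    ring
  rw [h2]
end

section
/- Let 0 < p < 1 and define P_t : ℤ × {−1, +1} → ℝ as in the symmetric Margolus-diffusion Markov chain: P_{t+1}(x, d) = p·P_t(x−d, d) + (1−p)·P_t(x, −d), P_0(x, ±1) = (1/2)·δ_{x,0}. Then the first conditional moments satisfy μ_t^{(1)+} := ∑_x x·P_t(x, +1) = (p/(4(1−p)))·(1 − (2p−1)^t) and μ_t^{(1)−} := ∑_x x·P_t(x, −1) = −(p/(4(1−p)))·(1 − (2p−1)^t). -/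
theorem margolus_chain_first_conditional_moments
    (p : ℝ) (hp0 : 0 < p) (hp1 : p < 1)
    (P : ℕ → ℤ → ℤ → ℝ)
    (hinit : ∀ x : ℤ,
      P 0 x 1 = (if x = 0 then (1 : ℝ) / 2 else 0) ∧
      P 0 x (-1) = (if x = 0 then (1 : ℝ) / 2 else 0))
    (hrec : ∀ (t : ℕ) (x d : ℤ), d = 1 ∨ d = -1 →
      P (t + 1) x d = p * P t (x - d) d + (1 - p) * P t x (-d)) :
    ∀ t : ℕ,
      (∑' x : ℤ, (x : ℝ) * P t x 1)
          = p / (4 * (1 - p)) * (1 - (2 * p - 1) ^ t) ∧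
      (∑' x : ℤ, (x : ℝ) * P t x (-1))
          = -(p / (4 * (1 - p)) * (1 - (2 * p - 1) ^ t)) := by
  -- support bound
  have hsupp : ∀ t : ℕ, ∀ d : ℤ, d = 1 ∨ d = -1 → ∀ x : ℤ, (t : ℤ) < |x| → P t x d = 0 := by
    intro t
    induction t with
    | zero =>
      intro d hd x hx
      have hx0 : x ≠ 0 := by
        intro h; rw [h] at hx; simp at hx
      rcases hd with h | h <;> simp [h, (hinit x).1, (hinit x).2, hx0]
    | succ t ih =>
      intro d hd x hx
      have hnd : -d = 1 ∨ -d = -1 := by rcases hd with h | h <;> simp [h]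
      rw [hrec t x d hd, ih d hd, ih (-d) hnd, mul_zero, mul_zero, add_zero]
      · rcases abs_cases x with ⟨h1, h2⟩ | ⟨h1, h2⟩ <;> push_cast at hx ⊢ <;> linarith
      · rcases hd with h | h <;> subst h <;>
          (try simp only [sub_neg_eq_add]) <;>
          rcases abs_cases x with ⟨h1, h2⟩ | ⟨h1, h2⟩ <;>
          rcases abs_cases (x - 1) with ⟨h3, h4⟩ | ⟨h3, h4⟩ <;>
          rcases abs_cases (x + 1) with ⟨h5, h6⟩ | ⟨h5, h6⟩ <;>
          push_cast at hx ⊢ <;> linarith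
  -- summability of anything of the form g x * P t x d
  have hsummable : ∀ (t : ℕ) (d : ℤ), d = 1 ∨ d = -1 → ∀ g : ℤ → ℝ,
      Summable (fun x : ℤ => g x * P t x d) := by
    intro t d hd g
    apply summable_of_ne_finset_zero (s := Finset.Icc (-(t : ℤ)) t)
    intro x hx
    rw [hsupp t d hd x ?_, mul_zero]
    simp only [Finset.mem_Icc, not_and_or, not_le] at hx
    rcases abs_cases x with ⟨h1, h2⟩ | ⟨h1, h2⟩ <;> omega
  -- shift identity: ∑ g x * P t (x-d) d = ∑ g (x+d) * P t x d
  have hshift : ∀ (t : ℕ) (d : ℤ) (g : ℤ → ℝ),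
      (∑' x : ℤ, g x * P t (x - d) d) = ∑' x : ℤ, g (x + d) * P t x d := by
    intro t d g
    exact ((Equiv.addRight d).tsum_eq (fun x : ℤ => g x * P t (x - d) d)).symm.trans
      (tsum_congr fun x => by simp)
  have hshiftsum : ∀ (t : ℕ) (d : ℤ), d = 1 ∨ d = -1 → ∀ g : ℤ → ℝ,
      Summable (fun x : ℤ => g x * P t (x - d) d) := by
    intro t d hd g
    have := ((Equiv.subRight d).summable_iff
        (f := fun x : ℤ => g (x + d) * P t x d)).2 (hsummable t d hd (fun x => g (x + d)))
    refine this.congr fun x => ?_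
    simp [Equiv.subRight]
  -- mass lemma
  have hmass : ∀ t : ℕ, (∑' x : ℤ, P t x 1) = 1 / 2 ∧ (∑' x : ℤ, P t x (-1)) = 1 / 2 := by
    intro t
    induction t with
    | zero =>
      constructor
      · rw [tsum_eq_single 0 (fun x hx => by simp [(hinit x).1, hx])]
        simp [(hinit 0).1]
      · rw [tsum_eq_single 0 (fun x hx => by simp [(hinit x).2, hx])]
        simp [(hinit 0).2]
    | succ t ih =>
      have key : ∀ d : ℤ, d = 1 ∨ d = -1 →
          (∑' x : ℤ, P (t + 1) x d)
            = p * (∑' x : ℤ, P t x d) + (1 - p) * (∑' x : ℤ, P t x (-d)) := by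
        intro d hd
        have hnd : -d = 1 ∨ -d = -1 := by rcases hd with h | h <;> simp [h]
        have h1 : Summable (fun x : ℤ => p * P t (x - d) d) := by
          have := (hshiftsum t d hd (fun _ => (1 : ℝ))).mul_left p
          refine this.congr fun x => by ring
        have h2 : Summable (fun x : ℤ => (1 - p) * P t x (-d)) := by
          have := (hsummable t (-d) hnd (fun _ => (1 : ℝ))).mul_left (1 - p)
          refine this.congr fun x => by ring
        calc (∑' x : ℤ, P (t + 1) x d)
            = ∑' x : ℤ, (p * P t (x - d) d + (1 - p) * P t x (-d)) :=
              tsum_congr fun x => hrec t x d hd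
          _ = (∑' x : ℤ, p * P t (x - d) d) + ∑' x : ℤ, (1 - p) * P t x (-d) :=
              Summable.tsum_add h1 h2
          _ = p * (∑' x : ℤ, P t (x - d) d) + (1 - p) * ∑' x : ℤ, P t x (-d) := by
              rw [tsum_mul_left, tsum_mul_left]
          _ = p * (∑' x : ℤ, P t x d) + (1 - p) * ∑' x : ℤ, P t x (-d) := by
              have := hshift t d (fun _ => (1 : ℝ))
              simp only [one_mul] at this
              rw [this]
      constructor
      · rw [key 1 (Or.inl rfl), ih.1]
        rw [ih.2]; ring
      · rw [key (-1) (Or.inr rfl), ih.2]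
        simp only [neg_neg]
        rw [ih.1]; ring
  -- moment recurrence
  have hmom : ∀ (t : ℕ) (d : ℤ), d = 1 ∨ d = -1 →
      (∑' x : ℤ, (x : ℝ) * P (t + 1) x d)
        = p * ((∑' x : ℤ, (x : ℝ) * P t x d) + (d : ℝ) * (∑' x : ℤ, P t x d))
          + (1 - p) * (∑' x : ℤ, (x : ℝ) * P t x (-d)) := by
    intro t d hd
    have hnd : -d = 1 ∨ -d = -1 := by rcases hd with h | h <;> simp [h]
    have h1 : Summable (fun x : ℤ => p * ((x : ℝ) * P t (x - d) d)) :=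
      (hshiftsum t d hd (fun x => (x : ℝ))).mul_left p
    have h2 : Summable (fun x : ℤ => (1 - p) * ((x : ℝ) * P t x (-d))) :=
      (hsummable t (-d) hnd (fun x => (x : ℝ))).mul_left (1 - p)
    have h3 : Summable (fun x : ℤ => (x : ℝ) * P t x d) := hsummable t d hd _
    have h4 : Summable (fun x : ℤ => (d : ℝ) * P t x d) := hsummable t d hd _
    calc (∑' x : ℤ, (x : ℝ) * P (t + 1) x d)
        = ∑' x : ℤ, (p * ((x : ℝ) * P t (x - d) d) + (1 - p) * ((x : ℝ) * P t x (-d))) := by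
          refine tsum_congr fun x => ?_
          rw [hrec t x d hd]; ring
      _ = (∑' x : ℤ, p * ((x : ℝ) * P t (x - d) d))
            + ∑' x : ℤ, (1 - p) * ((x : ℝ) * P t x (-d)) := Summable.tsum_add h1 h2
      _ = p * (∑' x : ℤ, (x : ℝ) * P t (x - d) d)
            + (1 - p) * ∑' x : ℤ, (x : ℝ) * P t x (-d) := by
          rw [tsum_mul_left, tsum_mul_left]
      _ = p * (∑' x : ℤ, ((x : ℝ) * P t x d + (d : ℝ) * P t x d))
            + (1 - p) * ∑' x : ℤ, (x : ℝ) * P t x (-d) := by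
          rw [hshift t d (fun x => (x : ℝ))]
          congr 1
          congr 1
          refine tsum_congr fun x => ?_
          push_cast
          ring
      _ = p * ((∑' x : ℤ, (x : ℝ) * P t x d) + (d : ℝ) * (∑' x : ℤ, P t x d))
            + (1 - p) * ∑' x : ℤ, (x : ℝ) * P t x (-d) := by
          rw [Summable.tsum_add h3 h4, tsum_mul_left]
  -- main induction
  intro t
  induction t with
  | zero =>
    have h1 : (∑' x : ℤ, (x : ℝ) * P 0 x 1) = 0 := by
      rw [tsum_eq_single 0 (fun x hx => by simp [(hinit x).1, hx])]
      simp
    have h2 : (∑' x : ℤ, (x : ℝ) * P 0 x (-1)) = 0 := by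
      rw [tsum_eq_single 0 (fun x hx => by simp [(hinit x).2, hx])]
      simp
    rw [h1, h2]; norm_num
  | succ t ih =>
    have m1 := (hmass t).1
    have m2 := (hmass t).2
    have r1 := hmom t 1 (Or.inl rfl)
    have r2 := hmom t (-1) (Or.inr rfl)
    simp only [show -(1 : ℤ) = -1 from rfl, neg_neg, Int.cast_one, Int.cast_neg] at r1 r2
    rw [ih.1, ih.2, m1] at r1
    rw [ih.1, ih.2, m2] at r2
    have hp1' : (1 : ℝ) - p ≠ 0 := by linarith
    constructor
    · rw [r1]
      field_simp
      ring
    · rw [r2]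
      field_simp
      ring
end

section
/- Let 0 < p < 1 and define P_t as in the symmetric Margolus-diffusion Markov chain. Then the expectation M_{X_t} = ∑_{x∈ℤ} x·(P_t(x,+1) + P_t(x,−1)) equals 0 for all t, and the second moment (= variance) satisfies D_{X_t} = ∑_{x∈ℤ} x²·(P_t(x,+1)+P_t(x,−1)) = (p²/(2(1−p)²))·(−1 + (2(1−p)/p)·t + (2p−1)^t). -/
theorem margolus_chain_expectation_and_dispersion
    (p : ℝ) (hp0 : 0 < p) (hp1 : p < 1)
    (P : ℕ → ℤ → ℤ → ℝ)
    (hinit : ∀ x : ℤ,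
      P 0 x 1 = (if x = 0 then (1 : ℝ) / 2 else 0) ∧
      P 0 x (-1) = (if x = 0 then (1 : ℝ) / 2 else 0))
    (hrec : ∀ (t : ℕ) (x d : ℤ), d = 1 ∨ d = -1 →
      P (t + 1) x d = p * P t (x - d) d + (1 - p) * P t x (-d)) :
    ∀ t : ℕ,
      (∑' x : ℤ, (x : ℝ) * (P t x 1 + P t x (-1))) = 0 ∧
      (∑' x : ℤ, (x : ℝ) ^ 2 * (P t x 1 + P t x (-1)))
        = p ^ 2 / (2 * (1 - p) ^ 2) *
            (-1 + 2 * (1 - p) / p * t + (2 * p - 1) ^ t) := by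
  have hp : p ≠ 0 := ne_of_gt hp0
  have h1p : (1 : ℝ) - p ≠ 0 := by intro h; linarith
  -- finite support of P t
  have hsupp : ∀ t : ℕ, ∀ d : ℤ, (d = 1 ∨ d = -1) →
      ∀ x : ℤ, x ∉ Finset.Icc (-(t : ℤ)) (t : ℤ) → P t x d = 0 := by
    intro t
    induction t with
    | zero =>
      intro d hd x hx
      have hx0 : x ≠ 0 := by
        simp only [Finset.mem_Icc] at hx
        omega
      rcases hd with rfl | rfl
      · rw [(hinit x).1, if_neg hx0]
      · rw [(hinit x).2, if_neg hx0]
    | succ t ih =>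
      intro d hd x hx
      rw [hrec t x d hd]
      have h1 : P t (x - d) d = 0 := by
        apply ih d hd
        simp only [Finset.mem_Icc] at hx ⊢
        push_cast at hx ⊢
        rcases hd with rfl | rfl <;> omega
      have h2 : P t x (-d) = 0 := by
        have hd' : -d = 1 ∨ -d = -1 := by rcases hd with rfl | rfl <;> norm_num
        apply ih (-d) hd'
        simp only [Finset.mem_Icc] at hx ⊢
        push_cast at hx ⊢
        omega
      rw [h1, h2]; ring
  -- summability
  have hS : ∀ (k t : ℕ) (d : ℤ), (d = 1 ∨ d = -1) →
      Summable (fun x : ℤ => ((x : ℝ)) ^ k * P t x d) := by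
    intro k t d hd
    apply summable_of_ne_finset_zero (s := Finset.Icc (-(t : ℤ)) (t : ℤ))
    intro x hx
    rw [hsupp t d hd x hx, mul_zero]
  have hS' : ∀ (k t : ℕ) (d : ℤ), (d = 1 ∨ d = -1) →
      Summable (fun x : ℤ => ((x : ℝ)) ^ k * P t (x - d) d) := by
    intro k t d hd
    apply summable_of_ne_finset_zero (s := Finset.Icc (-(t : ℤ) + d) ((t : ℤ) + d))
    intro x hx
    rw [hsupp t d hd (x - d) (by simp only [Finset.mem_Icc] at hx ⊢; omega), mul_zero]
  -- shift identity
  have hshift : ∀ (k t : ℕ) (d : ℤ),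
      (∑' x : ℤ, ((x : ℝ)) ^ k * P t (x - d) d)
        = ∑' y : ℤ, ((y : ℝ) + (d : ℝ)) ^ k * P t y d := by
    intro k t d
    rw [← (Equiv.addRight d).tsum_eq (f := fun x : ℤ => ((x : ℝ)) ^ k * P t (x - d) d)]
    apply tsum_congr
    intro y
    have h1 : (Equiv.addRight d) y = y + d := rfl
    rw [h1]
    have h2 : y + d - d = y := by ring
    rw [h2]
    push_cast
    ring
  -- the recurrence step for moments
  have step : ∀ (k t : ℕ) (d : ℤ), (d = 1 ∨ d = -1) →
      (∑' x : ℤ, ((x : ℝ)) ^ k * P (t + 1) x d)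
        = p * (∑' y : ℤ, ((y : ℝ) + (d : ℝ)) ^ k * P t y d)
          + (1 - p) * (∑' x : ℤ, ((x : ℝ)) ^ k * P t x (-d)) := by
    intro k t d hd
    have hd' : -d = 1 ∨ -d = -1 := by rcases hd with rfl | rfl <;> norm_num
    rw [← hshift k t d]
    calc (∑' x : ℤ, ((x : ℝ)) ^ k * P (t + 1) x d)
        = ∑' x : ℤ, (p * (((x : ℝ)) ^ k * P t (x - d) d)
            + (1 - p) * (((x : ℝ)) ^ k * P t x (-d))) :=
          tsum_congr fun x => by rw [hrec t x d hd]; ring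
      _ = _ := by
          rw [Summable.tsum_add ((hS' k t d hd).mul_left p) ((hS k t (-d) hd').mul_left (1 - p)),
            tsum_mul_left, tsum_mul_left]
  -- the main induction: closed forms for zeroth, first and second moments
  have main : ∀ t : ℕ, ∀ d : ℤ, (d = 1 ∨ d = -1) →
      (∑' x : ℤ, ((x : ℝ)) ^ 0 * P t x d) = 1 / 2 ∧
      (∑' x : ℤ, ((x : ℝ)) ^ 1 * P t x d)
        = (d : ℝ) * (p * (1 - (2 * p - 1) ^ t) / (4 * (1 - p))) ∧
      (∑' x : ℤ, ((x : ℝ)) ^ 2 * P t x d)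
        = p * t / (2 * (1 - p)) + p ^ 2 * ((2 * p - 1) ^ t - 1) / (4 * (1 - p) ^ 2) := by
    intro t
    induction t with
    | zero =>
      intro d hd
      have e : ∀ x : ℤ, P 0 x d = if x = 0 then (1 : ℝ) / 2 else 0 := by
        intro x
        rcases hd with rfl | rfl
        exacts [(hinit x).1, (hinit x).2]
      refine ⟨?_, ?_, ?_⟩
      · rw [tsum_eq_single (0 : ℤ) (fun x hx => by rw [e x, if_neg hx, mul_zero])]
        rw [e 0, if_pos rfl]
        norm_num
      · rw [tsum_eq_single (0 : ℤ) (fun x hx => by rw [e x, if_neg hx, mul_zero])]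
        norm_num
      · rw [tsum_eq_single (0 : ℤ) (fun x hx => by rw [e x, if_neg hx, mul_zero])]
        norm_num
    | succ t ih =>
      intro d hd
      have hd' : -d = 1 ∨ -d = -1 := by rcases hd with rfl | rfl <;> norm_num
      obtain ⟨i0, i1, i2⟩ := ih d hd
      obtain ⟨j0, j1, j2⟩ := ih (-d) hd'
      refine ⟨?_, ?_, ?_⟩
      · rw [step 0 t d hd]
        have e0 : (∑' y : ℤ, ((y : ℝ) + (d : ℝ)) ^ 0 * P t y d)
            = ∑' y : ℤ, ((y : ℝ)) ^ 0 * P t y d := tsum_congr fun y => by norm_num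
        rw [e0, i0, j0]
        ring
      · rw [step 1 t d hd]
        have h0 := (hS 0 t d hd).mul_left (d : ℝ)
        have e1 : (∑' y : ℤ, ((y : ℝ) + (d : ℝ)) ^ 1 * P t y d)
            = (∑' y : ℤ, ((y : ℝ)) ^ 1 * P t y d)
              + (d : ℝ) * (∑' y : ℤ, ((y : ℝ)) ^ 0 * P t y d) := by
          rw [← tsum_mul_left, ← Summable.tsum_add (hS 1 t d hd) h0]
          exact tsum_congr fun y => by ring
        rw [e1, i0, i1, j1]
        rcases hd with rfl | rfl <;>
          · push_cast
            field_simp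
            ring
      · rw [step 2 t d hd]
        have h1 := (hS 1 t d hd).mul_left (2 * (d : ℝ))
        have h0 := (hS 0 t d hd).mul_left ((d : ℝ) * (d : ℝ))
        have e2 : (∑' y : ℤ, ((y : ℝ) + (d : ℝ)) ^ 2 * P t y d)
            = (∑' y : ℤ, ((y : ℝ)) ^ 2 * P t y d)
              + ((2 * (d : ℝ)) * (∑' y : ℤ, ((y : ℝ)) ^ 1 * P t y d)
                + ((d : ℝ) * (d : ℝ)) * (∑' y : ℤ, ((y : ℝ)) ^ 0 * P t y d)) := by
          rw [← tsum_mul_left (a := 2 * (d : ℝ)), ← tsum_mul_left (a := (d : ℝ) * (d : ℝ)),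
            ← Summable.tsum_add h1 h0, ← Summable.tsum_add (hS 2 t d hd) (h1.add h0)]
          exact tsum_congr fun y => by ring
        rw [e2, i0, i1, i2, j2]
        rcases hd with rfl | rfl <;>
          · push_cast
            field_simp
            ring
  intro t
  obtain ⟨a0, a1, a2⟩ := main t 1 (Or.inl rfl)
  obtain ⟨b0, b1, b2⟩ := main t (-1) (Or.inr rfl)
  constructor
  · have e : (∑' x : ℤ, (x : ℝ) * (P t x 1 + P t x (-1)))
        = (∑' x : ℤ, ((x : ℝ)) ^ 1 * P t x 1) + (∑' x : ℤ, ((x : ℝ)) ^ 1 * P t x (-1)) := by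
      rw [← Summable.tsum_add (hS 1 t 1 (Or.inl rfl)) (hS 1 t (-1) (Or.inr rfl))]
      exact tsum_congr fun x => by ring
    rw [e, a1, b1]
    push_cast
    ring
  · have e : (∑' x : ℤ, (x : ℝ) ^ 2 * (P t x 1 + P t x (-1)))
        = (∑' x : ℤ, ((x : ℝ)) ^ 2 * P t x 1) + (∑' x : ℤ, ((x : ℝ)) ^ 2 * P t x (-1)) := by
      rw [← Summable.tsum_add (hS 2 t 1 (Or.inl rfl)) (hS 2 t (-1) (Or.inr rfl))]
      exact tsum_congr fun x => by ring
    rw [e, a2, b2]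
    field_simp
    ring
end

section
/- For the Margolus-diffusion Markov chain with parameter p ∈ (0,1), p ≠ 1/2, and symmetric initial condition, the marginal distribution at odd times and even positions is P_{2n+1}(2j) = (1−p) p^{2j} (1−2p)^{n−j} · J_{n−j}^{(2j,0)}(2p²/(1−2p) + 1) for 0 ≤ j ≤ n, where J_m^{(α,β)}(x) denotes the Jacobi polynomial of degree m with parameters (α, β). -/
/-- Generalized binomial coefficient `C(a, m)` for real `a`. -/
noncomputable def genBinom (a : ℝ) (m : ℕ) : ℝ :=
  (∏ i ∈ Finset.range m, (a - i)) / (m.factorial : ℝ)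

/-- Jacobi polynomial `P_n^{(α,β)}(x)` via its finite-sum representation. -/
noncomputable def jacobiP (n : ℕ) (α β x : ℝ) : ℝ :=
  ∑ k ∈ Finset.range (n + 1),
    genBinom ((n : ℝ) + α) (n - k) * genBinom ((n : ℝ) + β) k *
      ((x - 1) / 2) ^ k * ((x + 1) / 2) ^ (n - k)

/-!
A trajectory that ends heading right after `f` flips, `a` steps right and `b` steps left has
probability `p ^ (a + b) * (1 - p) ^ f / 2` (the `1 / 2` picks the initial direction), and the
trajectories with these data are counted by distributing the right steps over the `f / 2 + 1`
rightward runs and the left steps over the `(f + 1) / 2` leftward runs. Summing over `f` gives a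
closed form for `P t x 1`, which satisfies the recurrence by Pascal's rule for `Nat.multichoose`.
At time `2 n + 1` and position `± 2 j` only `f = 2 i + 1` contributes, with weight
`(1 - p) ^ (2 i + 1) * p ^ (2 (n - i)) * C(n + j, i) * C(n - j, i)`; reversing the order of
summation and clearing the denominator `(1 - 2 p) ^ (n - j)` turns the Jacobi sum into the same sum.
-/

open Finset

lemma genBinom_natCast (N k : ℕ) : genBinom N k = N.choose k := by
  rw [genBinom, ← descPochhammer_eval_eq_prod_range, descPochhammer_eval_eq_descFactorial,
    Nat.descFactorial_eq_factorial_mul_choose, Nat.cast_mul,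
    mul_div_cancel_left₀ _ (by positivity)]

lemma jacobiP_homogenize (n : ℕ) (α β u : ℝ) {c : ℝ} (hc : c ≠ 0) :
    c ^ n * jacobiP n α β (2 * u / c + 1) =
      ∑ k ∈ range (n + 1),
        genBinom (n + α) (n - k) * genBinom (n + β) k * u ^ k * (u + c) ^ (n - k) := by
  rw [jacobiP, mul_sum]
  refine sum_congr rfl fun k hk => ?_
  have hkn : k ≤ n := Nat.lt_succ_iff.1 (mem_range.1 hk)
  rw [show (2 * u / c + 1 - 1) / 2 = u / c by ring,
    show (2 * u / c + 1 + 1) / 2 = (u + c) / c by field_simp; ring,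
    div_pow, div_pow, ← Nat.add_sub_cancel' hkn, pow_add, Nat.add_sub_cancel_left]
  field_simp

lemma Finset.sum_range_two_mul {M : Type*} [AddCommMonoid M] (g : ℕ → M) (n : ℕ) :
    ∑ k ∈ range (2 * n), g k = ∑ i ∈ range n, (g (2 * i) + g (2 * i + 1)) := by
  induction n with
  | zero => simp
  | succ n ih => rw [show 2 * (n + 1) = 2 * n + 1 + 1 by ring, sum_range_succ, sum_range_succ, ih,
      sum_range_succ, add_assoc]

namespace Margolus

variable (p : ℝ)

/-- `p ^ a` times the number of ways to distribute `a` steps over `r` runs. -/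
noncomputable def runWeight (r : ℕ) (a : ℤ) : ℝ :=
  if 0 ≤ a then p ^ a.toNat * (Nat.multichoose r a.toNat : ℝ) else 0

lemma runWeight_of_neg {r : ℕ} {a : ℤ} (ha : a < 0) : runWeight p r a = 0 :=
  if_neg (not_le.2 ha)

lemma runWeight_natCast (r k : ℕ) : runWeight p r k = p ^ k * (Nat.multichoose r k : ℝ) := by
  simp [runWeight]

lemma runWeight_zero (a : ℤ) : runWeight p 0 a = if a = 0 then 1 else 0 := by
  rcases lt_or_ge a 0 with ha | ha
  · rw [runWeight_of_neg p ha, if_neg ha.ne]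
  · lift a to ℕ using ha
    cases a with
    | zero => simp [runWeight]
    | succ k => simp [runWeight]; omega

lemma runWeight_succ (r : ℕ) (a : ℤ) :
    runWeight p (r + 1) a = runWeight p r a + p * runWeight p (r + 1) (a - 1) := by
  rcases lt_or_ge a 0 with ha | ha
  · rw [runWeight_of_neg p ha, runWeight_of_neg p ha, runWeight_of_neg p (by omega)]
    ring
  · lift a to ℕ using ha
    cases a with
    | zero => simp [runWeight]
    | succ k =>
      rw [show ((k + 1 : ℕ) : ℤ) - 1 = k by push_cast; ring, runWeight_natCast,
        runWeight_natCast, runWeight_natCast, Nat.multichoose_succ_succ]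
      push_cast
      ring

lemma runWeight_succ_sub (m i : ℕ) :
    runWeight p (i + 1) ((m : ℤ) - i) = p ^ (m - i) * (m.choose i : ℝ) := by
  rcases lt_or_ge m i with h | h
  · rw [runWeight_of_neg p (by omega), Nat.choose_eq_zero_of_lt h]
    simp
  · rw [← Nat.cast_sub h, runWeight_natCast, Nat.multichoose_eq,
      show i + 1 + (m - i) - 1 = m by omega, Nat.choose_symm h]

/-- A trajectory with `f` flips that ends heading right has `f / 2 + 1` rightward and
`(f + 1) / 2` leftward runs. -/
noncomputable def pathWeight (f : ℕ) (a b : ℤ) : ℝ :=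
  (1 - p) ^ f * runWeight p (f / 2 + 1) a * runWeight p ((f + 1) / 2) b

lemma pathWeight_of_neg {f : ℕ} {a b : ℤ} (h : a < 0 ∨ b < 0) : pathWeight p f a b = 0 := by
  rcases h with h | h <;> simp [pathWeight, runWeight_of_neg p h]

lemma pathWeight_zero {a b : ℤ} (h : a + b ≠ 0) :
    pathWeight p 0 a b = p * pathWeight p 0 (a - 1) b := by
  simp only [pathWeight, pow_zero, one_mul, Nat.zero_div, zero_add, Nat.reduceDiv,
    runWeight_succ p 0 a, runWeight_zero]
  split_ifs <;> first | omega | ring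

lemma pathWeight_succ (f : ℕ) (a b : ℤ) :
    pathWeight p (f + 1) a b =
      p * pathWeight p (f + 1) (a - 1) b + (1 - p) * pathWeight p f b a := by
  simp only [pathWeight, runWeight_succ p ((f + 1) / 2) a,
    show (f + 1 + 1) / 2 = f / 2 + 1 by omega]
  ring

/-- A trajectory with `k` steps ending at `x` has `(k + x) / 2` right and `(k - x) / 2` left
steps. -/
noncomputable def endpointWeight (f : ℕ) (k x : ℤ) : ℝ :=
  if (k + x) % 2 = 0 then pathWeight p f ((k + x) / 2) ((k - x) / 2) else 0

lemma endpointWeight_of_neg {f : ℕ} {k : ℤ} (x : ℤ) (hk : k < 0) :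
    endpointWeight p f k x = 0 := by
  rw [endpointWeight]
  split_ifs
  · exact pathWeight_of_neg p (by omega)
  · rfl

lemma endpointWeight_zero_zero (x : ℤ) : endpointWeight p 0 0 x = if x = 0 then 1 else 0 := by
  rcases eq_or_ne x 0 with rfl | hx
  · simp [endpointWeight, pathWeight, runWeight]
  · rw [endpointWeight, if_neg hx]
    split_ifs
    · exact pathWeight_of_neg p (by omega)
    · rfl

lemma endpointWeight_zero {k : ℤ} (x : ℤ) (hk : k ≠ 0) :
    endpointWeight p 0 k x = p * endpointWeight p 0 (k - 1) (x - 1) := by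
  simp only [endpointWeight]
  split_ifs
  · rw [pathWeight_zero p (by omega), show (k - 1 + (x - 1)) / 2 = (k + x) / 2 - 1 by omega,
      show (k - 1 - (x - 1)) / 2 = (k - x) / 2 by omega]
  all_goals first | omega | ring

lemma endpointWeight_succ (f : ℕ) (k x : ℤ) :
    endpointWeight p (f + 1) k x =
      p * endpointWeight p (f + 1) (k - 1) (x - 1) + (1 - p) * endpointWeight p f k (-x) := by
  simp only [endpointWeight]
  split_ifs
  · rw [pathWeight_succ, show (k - 1 + (x - 1)) / 2 = (k + x) / 2 - 1 by omega,
      show (k - 1 - (x - 1)) / 2 = (k - x) / 2 by omega, show (k + -x) / 2 = (k - x) / 2 by omega,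
      show (k - -x) / 2 = (k + x) / 2 by omega]
  all_goals first | omega | ring

noncomputable def rightwardProb (t : ℕ) (x : ℤ) : ℝ :=
  (∑ f ∈ range (t + 1), endpointWeight p f (t - f) x) / 2

lemma rightwardProb_zero (x : ℤ) : rightwardProb p 0 x = if x = 0 then 1 / 2 else 0 := by
  simp only [rightwardProb, zero_add, sum_range_one, Nat.cast_zero, sub_zero,
    endpointWeight_zero_zero]
  split_ifs <;> simp

lemma rightwardProb_succ (t : ℕ) (x : ℤ) :
    rightwardProb p (t + 1) x =
      p * rightwardProb p t (x - 1) + (1 - p) * rightwardProb p t (-x) := by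
  have hmove : ∑ f ∈ range (t + 1), endpointWeight p f (t - f) (x - 1) =
      ∑ f ∈ range (t + 2), endpointWeight p f (t - f) (x - 1) := by
    rw [sum_range_succ _ (t + 1), endpointWeight_of_neg p _ (by push_cast; omega), add_zero]
  have hsplit : ∀ f ∈ range (t + 1),
      endpointWeight p (f + 1) ((t + 1 : ℕ) - (f + 1 : ℕ)) x =
      p * endpointWeight p (f + 1) (t - (f + 1 : ℕ)) (x - 1) +
        (1 - p) * endpointWeight p f (t - f) (-x) := by
    intro f _
    rw [endpointWeight_succ]
    push_cast [add_sub_add_right_eq_sub, sub_sub]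
    rfl
  rw [rightwardProb, sum_range_succ', sum_congr rfl hsplit,
    endpointWeight_zero p x (show ((t + 1 : ℕ) : ℤ) - (0 : ℕ) ≠ 0 by omega), rightwardProb,
    rightwardProb, hmove, sum_range_succ' _ (t + 1), sum_add_distrib, ← mul_sum, ← mul_sum]
  push_cast [sub_zero, add_sub_cancel_right]
  ring

theorem eq_rightwardProb {P : ℕ → ℤ → ℤ → ℝ}
    (hinit : ∀ x : ℤ,
      P 0 x 1 = (if x = 0 then (1 : ℝ) / 2 else 0) ∧
      P 0 x (-1) = (if x = 0 then (1 : ℝ) / 2 else 0))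
    (hrec : ∀ (t : ℕ) (x d : ℤ), d = 1 ∨ d = -1 →
      P (t + 1) x d = p * P t (x - d) d + (1 - p) * P t x (-d)) (t : ℕ) (x : ℤ) :
    P t x 1 = rightwardProb p t x ∧ P t x (-1) = rightwardProb p t (-x) := by
  induction t generalizing x with
  | zero => simp [hinit, rightwardProb_zero]
  | succ t ih =>
    constructor
    · rw [hrec t x 1 (.inl rfl), (ih (x - 1)).1, (ih x).2, rightwardProb_succ]
    · rw [hrec t x (-1) (.inr rfl), neg_neg, sub_neg_eq_add, (ih (x + 1)).2, (ih x).1,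
        rightwardProb_succ, neg_add', neg_neg]

lemma rightwardProb_odd_even (n : ℕ) (y : ℤ) :
    rightwardProb p (2 * n + 1) (2 * y) =
      (∑ i ∈ range (n + 1),
        (1 - p) ^ (2 * i + 1) * runWeight p (i + 1) (n - i + y) *
          runWeight p (i + 1) (n - i - y)) / 2 := by
  rw [rightwardProb, show 2 * n + 1 + 1 = 2 * (n + 1) by ring, sum_range_two_mul]
  congr 1
  refine sum_congr rfl fun i _ => ?_
  have heven : endpointWeight p (2 * i) ((2 * n + 1 : ℕ) - (2 * i : ℕ)) (2 * y) = 0 := by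
    rw [endpointWeight, if_neg (by push_cast; omega)]
  rw [heven, zero_add, endpointWeight, if_pos (by push_cast; omega), pathWeight,
    show (2 * i + 1) / 2 + 1 = i + 1 by omega, show (2 * i + 1 + 1) / 2 = i + 1 by omega]
  congr 3 <;> push_cast <;> omega

lemma rightwardProb_odd_add_neg (m j : ℕ) :
    rightwardProb p (2 * (m + j) + 1) (2 * j) + rightwardProb p (2 * (m + j) + 1) (-(2 * j)) =
      ∑ i ∈ range (m + 1),
        (1 - p) ^ (2 * i + 1) * p ^ (2 * (m + j - i)) *
          ((m + 2 * j).choose i * m.choose i : ℝ) := by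
  have hsum : ∀ i ∈ range (m + j + 1), (1 - p) ^ (2 * i + 1) *
      runWeight p (i + 1) ((m + j : ℕ) - i + j) * runWeight p (i + 1) ((m + j : ℕ) - i - j) =
      (1 - p) ^ (2 * i + 1) * p ^ (2 * (m + j - i)) *
        ((m + 2 * j).choose i * m.choose i : ℝ) := by
    intro i _
    rw [show ((m + j : ℕ) : ℤ) - i + j = (m + 2 * j : ℕ) - i by push_cast; ring,
      show ((m + j : ℕ) : ℤ) - i - j = (m : ℕ) - i by push_cast; ring,
      runWeight_succ_sub, runWeight_succ_sub]
    rcases lt_or_ge m i with h | h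
    · simp [Nat.choose_eq_zero_of_lt h]
    · rw [show 2 * (m + j - i) = (m + 2 * j - i) + (m - i) by omega, pow_add]
      ring
  have hpos : rightwardProb p (2 * (m + j) + 1) (2 * j) =
      (∑ i ∈ range (m + 1), (1 - p) ^ (2 * i + 1) * p ^ (2 * (m + j - i)) *
        ((m + 2 * j).choose i * m.choose i : ℝ)) / 2 := by
    rw [rightwardProb_odd_even, sum_congr rfl hsum,
      sum_subset (range_subset_range.2 (by omega : m + 1 ≤ m + j + 1))]
    intro i _ hi
    simp [Nat.choose_eq_zero_of_lt (show m < i by simpa using hi)]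
  have hsymm : rightwardProb p (2 * (m + j) + 1) (-(2 * j)) =
      rightwardProb p (2 * (m + j) + 1) (2 * j) := by
    rw [show -(2 * (j : ℤ)) = 2 * -(j : ℤ) by ring, rightwardProb_odd_even,
      rightwardProb_odd_even]
    simp only [sub_neg_eq_add, ← sub_eq_add_neg, mul_right_comm]
  rw [hsymm, hpos]
  ring

lemma jacobiP_eq_sum (hp : 1 - 2 * p ≠ 0) (m j : ℕ) :
    (1 - p) * p ^ (2 * j) * (1 - 2 * p) ^ m *
        jacobiP m (2 * j : ℝ) 0 (2 * p ^ 2 / (1 - 2 * p) + 1) =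
      ∑ i ∈ range (m + 1),
        (1 - p) ^ (2 * i + 1) * p ^ (2 * (m + j - i)) *
          ((m + 2 * j).choose i * m.choose i : ℝ) := by
  rw [mul_assoc, jacobiP_homogenize _ _ _ _ hp, mul_sum, ← sum_range_reflect]
  refine sum_congr rfl fun i hi => ?_
  have him : i ≤ m := Nat.lt_succ_iff.1 (mem_range.1 hi)
  rw [add_tsub_cancel_right, Nat.sub_sub_self him,
    show (m : ℝ) + 2 * j = (m + 2 * j : ℕ) by push_cast; ring, ← Nat.cast_zero,
    ← Nat.cast_add, genBinom_natCast, genBinom_natCast, add_zero, Nat.choose_symm him,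
    show p ^ 2 + (1 - 2 * p) = (1 - p) ^ 2 by ring, ← pow_mul (1 - p),
    show 2 * (m + j - i) = 2 * j + 2 * (m - i) by omega]
  ring

end Margolus

theorem margolus_chain_odd_time_even_position_general
    (p : ℝ) (hphalf : p ≠ 1 / 2)
    (P : ℕ → ℤ → ℤ → ℝ)
    (hinit : ∀ x : ℤ,
      P 0 x 1 = (if x = 0 then (1 : ℝ) / 2 else 0) ∧
      P 0 x (-1) = (if x = 0 then (1 : ℝ) / 2 else 0))
    (hrec : ∀ (t : ℕ) (x d : ℤ), d = 1 ∨ d = -1 →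
      P (t + 1) x d = p * P t (x - d) d + (1 - p) * P t x (-d)) :
    ∀ n j : ℕ, j ≤ n →
      P (2 * n + 1) (2 * (j : ℤ)) 1 + P (2 * n + 1) (2 * (j : ℤ)) (-1)
        = (1 - p) * p ^ (2 * j) * (1 - 2 * p) ^ (n - j) *
            jacobiP (n - j) (2 * j : ℝ) 0 (2 * p ^ 2 / (1 - 2 * p) + 1) := by
  intro n j hj
  obtain ⟨m, rfl⟩ := Nat.exists_eq_add_of_le' hj
  have hp : 1 - 2 * p ≠ 0 := fun h => hphalf (by linarith)
  obtain ⟨hright, hleft⟩ := Margolus.eq_rightwardProb p hinit hrec (2 * (m + j) + 1) (2 * j)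
  rw [hright, hleft, Margolus.rightwardProb_odd_add_neg, Nat.add_sub_cancel,
    Margolus.jacobiP_eq_sum p hp]

theorem margolus_chain_odd_time_even_position
    (p : ℝ) (hp0 : 0 < p) (hp1 : p < 1) (hphalf : p ≠ 1 / 2)
    (P : ℕ → ℤ → ℤ → ℝ)
    (hinit : ∀ x : ℤ,
      P 0 x 1 = (if x = 0 then (1 : ℝ) / 2 else 0) ∧
      P 0 x (-1) = (if x = 0 then (1 : ℝ) / 2 else 0))
    (hrec : ∀ (t : ℕ) (x d : ℤ), d = 1 ∨ d = -1 →
      P (t + 1) x d = p * P t (x - d) d + (1 - p) * P t x (-d)) :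
    ∀ n j : ℕ, j ≤ n →
      P (2 * n + 1) (2 * (j : ℤ)) 1 + P (2 * n + 1) (2 * (j : ℤ)) (-1)
        = (1 - p) * p ^ (2 * j) * (1 - 2 * p) ^ (n - j) *
            jacobiP (n - j) (2 * j : ℝ) 0 (2 * p ^ 2 / (1 - 2 * p) + 1) :=
  margolus_chain_odd_time_even_position_general p hphalf P hinit hrec
end

section
/- For the Margolus-diffusion Markov chain with parameter p ∈ (0,1), p ≠ 1/2, and symmetric initial condition, the marginal distribution at even times and odd positions is P_{2n}(2j+1) = (1−p) p^{2j+1} (1−2p)^{n−j−1} · J_{n−j−1}^{(2j+1,0)}(2p²/(1−2p) + 1) for 0 ≤ j ≤ n−1. -/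
/-!
Seen from the current direction, the position `s = x * d` evolves on its own: a move turns `s`
into `s + 1`, a flip into `-s`. A path with `f` flips and `m` moves consists of `f + 1` runs,
alternately backward and forward and ending forward, and has weight `p ^ m * (1 - p) ^ f`; the
paths ending at `s` are counted by distributing the forward and the backward moves over their
runs, a product of two multiset coefficients. At time `2 n` and odd `s = ±(2 j + 1)` only paths
with an odd number `2 g + 1` of flips contribute; they have `g + 1` runs of each kind, which makes
the two signs of `s` equally likely and gives the count `C(n + j, g) * C(n - j - 1, g)`. These are
the coefficients of the Jacobi sum written homogeneously in `p ^ 2` and `(1 - p) ^ 2`, whose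
difference is `1 - 2 p`.
-/

open Finset

theorem Finset.sum_range_two_mul_add_one_eq_sum_odd {M : Type*} [AddCommMonoid M] (F : ℕ → M)
    (hF : ∀ k, F (2 * k) = 0) (n : ℕ) :
    ∑ i ∈ range (2 * n + 1), F i = ∑ k ∈ range n, F (2 * k + 1) := by
  induction n with
  | zero => simpa using hF 0
  | succ n ih =>
    rw [show 2 * (n + 1) + 1 = 2 * n + 1 + 1 + 1 by ring, sum_range_succ, sum_range_succ, ih,
      show 2 * n + 1 + 1 = 2 * (n + 1) by ring, hF, add_zero, sum_range_succ]

/-- The number of ways to distribute `m` unit moves over `k` forward and `l` backward runs,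
each possibly empty, with net displacement `s`. -/
def runCount (k l m : ℕ) (s : ℤ) : ℕ :=
  ∑ ab ∈ antidiagonal m,
    if (ab.1 : ℤ) - ab.2 = s then k.multichoose ab.1 * l.multichoose ab.2 else 0

namespace runCount

theorem zero_moves (k l : ℕ) (s : ℤ) : runCount k l 0 s = if s = 0 then 1 else 0 := by
  simp [runCount, eq_comm]

theorem zero_zero_succ (m : ℕ) (s : ℤ) : runCount 0 0 (m + 1) s = 0 := by
  refine sum_eq_zero fun ab hab => ?_
  rw [HasAntidiagonal.mem_antidiagonal] at hab
  rcases ab with ⟨_ | a, _ | b⟩ <;> simp_all [Nat.multichoose_zero_succ]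

theorem comm (k l m : ℕ) (s : ℤ) : runCount k l m s = runCount l k m (-s) := by
  rw [runCount, ← Nat.sum_antidiagonal_swap]
  refine sum_congr rfl fun ab _ => ?_
  simp only [Prod.fst_swap, Prod.snd_swap, mul_comm (k.multichoose _)]
  congr 1
  apply propext
  omega

theorem succ_succ (k l m : ℕ) (s : ℤ) :
    runCount (k + 1) l (m + 1) s = runCount (k + 1) l m (s - 1) + runCount k l (m + 1) s := by
  have hcond (a b : ℕ) : ((a + 1 : ℕ) : ℤ) - b = s ↔ (a : ℤ) - b = s - 1 := by
    push_cast; omega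
  simp only [runCount, Nat.sum_antidiagonal_succ, Nat.multichoose_zero_right,
    Nat.multichoose_succ_succ, add_mul, ite_add_zero, sum_add_distrib, hcond]
  ring

theorem eq_zero_of_odd {k l m : ℕ} {s : ℤ} (h : Odd ((m : ℤ) + s)) :
    runCount k l m s = 0 := by
  refine sum_eq_zero fun ab hab => if_neg ?_
  rw [HasAntidiagonal.mem_antidiagonal] at hab
  rw [Int.odd_iff] at h
  omega

theorem eq_zero_of_lt {k l m : ℕ} {s : ℤ} (h : (m : ℤ) < s) :
    runCount k l m s = 0 := by
  refine sum_eq_zero fun ab hab => if_neg ?_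
  rw [HasAntidiagonal.mem_antidiagonal] at hab
  omega

theorem eq_multichoose_mul {k l m a b : ℕ} {s : ℤ} (hm : a + b = m) (hs : (a : ℤ) - b = s) :
    runCount k l m s = k.multichoose a * l.multichoose b := by
  rw [runCount, sum_eq_single (a, b) (fun ab hab hne => if_neg ?_) (by simp [hm]), if_pos hs]
  rw [HasAntidiagonal.mem_antidiagonal] at hab
  contrapose! hne
  ext <;> simp <;> omega

end runCount

/-- The paths with `f` flips and `m` moves ending at `s`: their runs alternate in direction and
the last one points forward, so `f / 2 + 1` runs are forward and `(f + 1) / 2` backward. -/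
def pathCount (f m : ℕ) (s : ℤ) : ℕ :=
  runCount (f / 2 + 1) ((f + 1) / 2) m s

/-- Twice `P_t(x, d)`, as a function of `t` and of `s = x * d`. -/
noncomputable def margolusWeight (p : ℝ) : ℕ → ℤ → ℝ
  | 0, s => if s = 0 then 1 else 0
  | t + 1, s => p * margolusWeight p t (s - 1) + (1 - p) * margolusWeight p t (-s)

theorem margolus_eq_margolusWeight_div_two {p : ℝ} {P : ℕ → ℤ → ℤ → ℝ}
    (hinit : ∀ x : ℤ,
      P 0 x 1 = (if x = 0 then (1 : ℝ) / 2 else 0) ∧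
      P 0 x (-1) = (if x = 0 then (1 : ℝ) / 2 else 0))
    (hrec : ∀ (t : ℕ) (x d : ℤ), d = 1 ∨ d = -1 →
      P (t + 1) x d = p * P t (x - d) d + (1 - p) * P t x (-d))
    (t : ℕ) (x d : ℤ) (hd : d = 1 ∨ d = -1) :
    P t x d = margolusWeight p t (x * d) / 2 := by
  induction t generalizing x d with
  | zero =>
    rcases hd with rfl | rfl
    · simp [(hinit x).1, margolusWeight, ite_div]
    · simp [(hinit x).2, margolusWeight, ite_div]
  | succ t ih =>
    have hnd : -d = 1 ∨ -d = -1 := by omega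
    have hshift : (x - d) * d = x * d - 1 := by rcases hd with rfl | rfl <;> ring
    rw [hrec t x d hd, ih _ _ hd, ih _ _ hnd, hshift, margolusWeight, mul_neg]
    ring

theorem margolusWeight_eq_sum (p : ℝ) (t : ℕ) (s : ℤ) :
    margolusWeight p t s =
      ∑ fm ∈ antidiagonal t, p ^ fm.2 * (1 - p) ^ fm.1 * (pathCount fm.1 fm.2 s : ℝ) := by
  induction t generalizing s with
  | zero => simp [margolusWeight, pathCount, runCount.zero_moves]
  | succ t ih =>
    -- `runCount (f / 2) ((f + 1) / 2)` counts the paths whose last step is a flip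
    have hmove : ∑ fm ∈ antidiagonal (t + 1),
          p ^ fm.2 * (1 - p) ^ fm.1 * (pathCount fm.1 fm.2 s : ℝ)
        = p * ∑ fm ∈ antidiagonal t,
            p ^ fm.2 * (1 - p) ^ fm.1 * (pathCount fm.1 fm.2 (s - 1) : ℝ)
          + ∑ fm ∈ antidiagonal (t + 1),
              p ^ fm.2 * (1 - p) ^ fm.1 * (runCount (fm.1 / 2) ((fm.1 + 1) / 2) fm.2 s : ℝ) := by
      simp only [Nat.sum_antidiagonal_succ', pathCount, runCount.zero_moves, runCount.succ_succ,
        mul_sum, Nat.cast_add, mul_add, sum_add_distrib, pow_succ]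
      rw [add_left_comm]
      exact congrArg (· + _) (sum_congr rfl fun _ _ => by ring)
    have hflip : ∑ fm ∈ antidiagonal (t + 1),
          p ^ fm.2 * (1 - p) ^ fm.1 * (runCount (fm.1 / 2) ((fm.1 + 1) / 2) fm.2 s : ℝ)
        = (1 - p) * ∑ fm ∈ antidiagonal t,
            p ^ fm.2 * (1 - p) ^ fm.1 * (pathCount fm.1 fm.2 (-s) : ℝ) := by
      rw [Nat.sum_antidiagonal_succ, mul_sum]
      simp only [Nat.zero_div, zero_add, Nat.reduceDiv, runCount.zero_zero_succ, Nat.cast_zero,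
        mul_zero]
      refine sum_congr rfl fun fm _ => ?_
      rw [runCount.comm, pathCount, show (fm.1 + 1 + 1) / 2 = fm.1 / 2 + 1 by omega, pow_succ]
      ring
    rw [margolusWeight, ih, ih, hmove, hflip]

theorem margolusWeight_neg (p : ℝ) {t : ℕ} {s : ℤ} (hts : Odd ((t : ℤ) + s)) :
    margolusWeight p t (-s) = margolusWeight p t s := by
  rw [margolusWeight_eq_sum, margolusWeight_eq_sum]
  refine sum_congr rfl fun fm hfm => ?_
  rw [HasAntidiagonal.mem_antidiagonal] at hfm
  rw [Int.odd_iff] at hts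
  rcases Nat.even_or_odd' fm.1 with ⟨g, hg | hg⟩
  · rw [pathCount, pathCount, runCount.eq_zero_of_odd, runCount.eq_zero_of_odd] <;>
      rw [Int.odd_iff] <;> omega
  · rw [hg, pathCount, pathCount, runCount.comm, neg_neg,
      show (2 * g + 1 + 1) / 2 = (2 * g + 1) / 2 + 1 by omega]

theorem pathCount_two_mul_add_one (g a b : ℕ) :
    pathCount (2 * g + 1) (a + b) ((a : ℤ) - b) = (g + a).choose g * (g + b).choose g := by
  rw [pathCount, show (2 * g + 1) / 2 + 1 = g + 1 by omega,
    show (2 * g + 1 + 1) / 2 = g + 1 by omega,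
    runCount.eq_multichoose_mul rfl rfl, Nat.multichoose_eq, Nat.multichoose_eq,
    show g + 1 + a - 1 = g + a by omega, show g + 1 + b - 1 = g + b by omega,
    ← Nat.choose_symm_add, ← Nat.choose_symm_add]

theorem margolusWeight_two_mul_odd (p : ℝ) (M j : ℕ) :
    margolusWeight p (2 * (M + j + 1)) (2 * j + 1) =
      ∑ g ∈ range (M + 1), ((M + 2 * j + 1).choose g * M.choose g : ℕ) *
        p ^ (2 * (M - g) + 2 * j + 1) * (1 - p) ^ (2 * g + 1) := by
  rw [margolusWeight_eq_sum, Nat.sum_antidiagonal_eq_sum_range_succ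
    (fun f m => p ^ m * (1 - p) ^ f * (pathCount f m (2 * j + 1) : ℝ)),
    Finset.sum_range_two_mul_add_one_eq_sum_odd]
  · rw [sum_subset (range_subset_range.2 (by omega : M + 1 ≤ M + j + 1)) fun g _ hg => by
      rw [mem_range, not_lt] at hg
      rw [Nat.choose_eq_zero_of_lt (by omega : M < g), mul_zero, Nat.cast_zero, zero_mul, zero_mul]]
    refine sum_congr rfl fun g hg => ?_
    rcases le_or_gt g M with hgM | hgM
    · obtain ⟨c, rfl⟩ := Nat.exists_eq_add_of_le hgM
      rw [show 2 * (g + c + j + 1) - (2 * g + 1) = (c + 2 * j + 1) + c by omega,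
        show (2 * j + 1 : ℤ) = ((c + 2 * j + 1 : ℕ) : ℤ) - (c : ℕ) by push_cast; ring,
        pathCount_two_mul_add_one, show g + (c + 2 * j + 1) = g + c + 2 * j + 1 by ring,
        show g + c - g = c by omega]
      ring
    · rw [pathCount, runCount.eq_zero_of_lt (by omega), Nat.choose_eq_zero_of_lt hgM]
      simp
  · intro k
    rw [pathCount, runCount.eq_zero_of_odd, Nat.cast_zero, mul_zero]
    rw [Int.odd_iff]
    omega

theorem genBinom_natCast_s13 (c m : ℕ) : genBinom c m = c.choose m := by
  rw [genBinom, ← descPochhammer_eval_eq_prod_range, Nat.cast_choose_eq_descPochhammer_div]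

theorem sub_pow_mul_jacobiP_div {u v : ℝ} (huv : v - u ≠ 0) (n : ℕ) (α β : ℝ) :
    (v - u) ^ n * jacobiP n α β ((v + u) / (v - u)) =
      ∑ k ∈ range (n + 1),
        genBinom (n + α) (n - k) * genBinom (n + β) k * u ^ k * v ^ (n - k) := by
  have hminus : ((v + u) / (v - u) - 1) / 2 = u / (v - u) := by field_simp; ring
  have hplus : ((v + u) / (v - u) + 1) / 2 = v / (v - u) := by field_simp; ring
  rw [jacobiP, mul_sum]
  refine sum_congr rfl fun k hk => ?_
  rw [hminus, hplus, div_pow, div_pow,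
    ← Nat.add_sub_cancel' (mem_range_succ_iff.1 hk), pow_add, Nat.add_sub_cancel_left]
  field_simp

theorem pow_mul_jacobiP_eq_sum_choose {p : ℝ} (hp : p ≠ 1 / 2) (M j : ℕ) :
    (1 - p) * p ^ (2 * j + 1) * (1 - 2 * p) ^ M *
        jacobiP M (2 * j + 1 : ℝ) 0 (2 * p ^ 2 / (1 - 2 * p) + 1) =
      ∑ g ∈ range (M + 1), ((M + 2 * j + 1).choose g * M.choose g : ℕ) *
        p ^ (2 * (M - g) + 2 * j + 1) * (1 - p) ^ (2 * g + 1) := by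
  have hsq : (1 - p) ^ 2 - p ^ 2 = 1 - 2 * p := by ring
  have h2p : (1 : ℝ) - 2 * p ≠ 0 := fun h => hp (by linarith)
  have hx : 2 * p ^ 2 / (1 - 2 * p) + 1 = ((1 - p) ^ 2 + p ^ 2) / ((1 - p) ^ 2 - p ^ 2) := by
    rw [hsq]
    field_simp
    ring
  rw [hx, mul_assoc, ← hsq, sub_pow_mul_jacobiP_div (hsq ▸ h2p), mul_sum, ← sum_range_reflect]
  refine sum_congr rfl fun g hg => ?_
  have hgM : g ≤ M := mem_range_succ_iff.1 hg
  rw [show (M : ℝ) + (2 * j + 1) = (M + 2 * j + 1 : ℕ) by push_cast; ring,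
    show (M : ℝ) + 0 = (M : ℕ) by simp, genBinom_natCast_s13, genBinom_natCast_s13,
    show M + 1 - 1 - g = M - g by omega, Nat.sub_sub_self hgM, Nat.choose_symm hgM,
    ← pow_mul, ← pow_mul]
  push_cast
  ring

theorem margolus_chain_even_time_odd_position_general
    (p : ℝ) (hphalf : p ≠ 1 / 2)
    (P : ℕ → ℤ → ℤ → ℝ)
    (hinit : ∀ x : ℤ,
      P 0 x 1 = (if x = 0 then (1 : ℝ) / 2 else 0) ∧
      P 0 x (-1) = (if x = 0 then (1 : ℝ) / 2 else 0))
    (hrec : ∀ (t : ℕ) (x d : ℤ), d = 1 ∨ d = -1 →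
      P (t + 1) x d = p * P t (x - d) d + (1 - p) * P t x (-d)) :
    ∀ n j : ℕ, j < n →
      P (2 * n) (2 * (j : ℤ) + 1) 1 + P (2 * n) (2 * (j : ℤ) + 1) (-1)
        = (1 - p) * p ^ (2 * j + 1) * (1 - 2 * p) ^ (n - j - 1) *
            jacobiP (n - j - 1) (2 * j + 1 : ℝ) 0 (2 * p ^ 2 / (1 - 2 * p) + 1) := by
  intro n j hjn
  obtain ⟨M, rfl⟩ : ∃ M, n = M + j + 1 := ⟨n - j - 1, by omega⟩
  have hodd : Odd (((2 * (M + j + 1) : ℕ) : ℤ) + (2 * j + 1)) :=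
    ⟨M + 2 * j + 1, by push_cast; ring⟩
  rw [margolus_eq_margolusWeight_div_two hinit hrec _ _ _ (Or.inl rfl),
    margolus_eq_margolusWeight_div_two hinit hrec _ _ _ (Or.inr rfl), mul_one, mul_neg_one,
    margolusWeight_neg p hodd, add_halves, show M + j + 1 - j - 1 = M by omega,
    margolusWeight_two_mul_odd, pow_mul_jacobiP_eq_sum_choose hphalf]

theorem margolus_chain_even_time_odd_position
    (p : ℝ) (hp0 : 0 < p) (hp1 : p < 1) (hphalf : p ≠ 1 / 2)
    (P : ℕ → ℤ → ℤ → ℝ)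
    (hinit : ∀ x : ℤ,
      P 0 x 1 = (if x = 0 then (1 : ℝ) / 2 else 0) ∧
      P 0 x (-1) = (if x = 0 then (1 : ℝ) / 2 else 0))
    (hrec : ∀ (t : ℕ) (x d : ℤ), d = 1 ∨ d = -1 →
      P (t + 1) x d = p * P t (x - d) d + (1 - p) * P t x (-d)) :
    ∀ n j : ℕ, j < n →
      P (2 * n) (2 * (j : ℤ) + 1) 1 + P (2 * n) (2 * (j : ℤ) + 1) (-1)
        = (1 - p) * p ^ (2 * j + 1) * (1 - 2 * p) ^ (n - j - 1) *
            jacobiP (n - j - 1) (2 * j + 1 : ℝ) 0 (2 * p ^ 2 / (1 - 2 * p) + 1) :=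
  margolus_chain_even_time_odd_position_general p hphalf P hinit hrec
end

section
/- Define Q(n,k) = ∑_{j=0}^{n−k} C(2n+1, 2j) C(n−j, k) and R(n,k) = ∑_{j=0}^{n−k} C(2n+2, 2j+1) C(n−j, k). Then Q(n,k) = 4^{n−k} C(2n−k, k) and R(n,k) = 2·4^{n−k} C(2n−k+1, k); consequently R(n,k) is obtained from the closed form of Q by the half-integer shift n ↦ n + 1/2. -/
/-- `Q(n,k) = ∑_{j=0}^{n-k} C(2n+1, 2j) C(n-j, k)`. -/
def Qnum (n k : ℕ) : ℕ :=
  ∑ j ∈ Finset.range (n - k + 1), Nat.choose (2 * n + 1) (2 * j) * Nat.choose (n - j) k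

/-- `R(n,k) = ∑_{j=0}^{n-k} C(2n+2, 2j+1) C(n-j, k)`. -/
def Rnum (n k : ℕ) : ℕ :=
  ∑ j ∈ Finset.range (n - k + 1), Nat.choose (2 * n + 2) (2 * j + 1) * Nat.choose (n - j) k

open Polynomial Finset

namespace QRAux

noncomputable def t (a k : ℕ) : ℤ[X] :=
  (((a - k).choose k * 2 ^ (a - 2 * k) : ℕ) : ℤ[X]) * (X ^ 2 - 1) ^ k

/-- The "Fibonacci polynomial"-style sum. -/
noncomputable def F (m : ℕ) : ℤ[X] := ∑ k ∈ range (m + 1), t m k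

lemma t_zero (a k : ℕ) (h : a < 2 * k) : t a k = 0 := by
  have h0 : (a - k).choose k = 0 := Nat.choose_eq_zero_of_lt (by omega)
  simp [t, h0]

lemma F_eq_sum (m N : ℕ) (h : m + 1 ≤ N) : F m = ∑ k ∈ range N, t m k := by
  rw [F]
  apply Finset.sum_subset (Finset.range_subset_range.2 h)
  intro x _ hx
  exact t_zero m x (by simp at hx; omega)

lemma F_eq_sum' (m N : ℕ) (h : m < 2 * N) : F m = ∑ k ∈ range N, t m k := by
  rcases le_total (m + 1) N with hN | hN
  · exact F_eq_sum m N hN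
  · rw [F]
    symm
    apply Finset.sum_subset (Finset.range_subset_range.2 hN)
    intro x _ hx
    exact t_zero m x (by simp at hx; omega)

lemma coef_rec (m k' : ℕ) :
    (m + 2 - (k' + 1)).choose (k' + 1) * 2 ^ (m + 2 - 2 * (k' + 1)) =
      2 * ((m + 1 - (k' + 1)).choose (k' + 1) * 2 ^ (m + 1 - 2 * (k' + 1)))
        + (m - k').choose k' * 2 ^ (m - 2 * k') := by
  rcases Nat.lt_or_ge (2 * k' + 2) (m + 2) with h | h
  · have e1 : m + 2 - (k' + 1) = (m - k') + 1 := by omega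
    have e2 : m + 1 - (k' + 1) = m - k' := by omega
    have e3 : m + 2 - 2 * (k' + 1) = m - 2 * k' := by omega
    have e4 : m - 2 * k' = (m + 1 - 2 * (k' + 1)) + 1 := by omega
    rw [e1, e2, e3, Nat.choose_succ_succ, e4, pow_succ]
    ring
  · rcases Nat.eq_or_lt_of_le h with h2 | h2
    · have e1 : m + 2 - (k' + 1) = k' + 1 := by omega
      have e2 : m - k' = k' := by omega
      have e3 : m + 2 - 2 * (k' + 1) = 0 := by omega
      have e4 : m - 2 * k' = 0 := by omega
      have e5 : (m + 1 - (k' + 1)).choose (k' + 1) = 0 :=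
        Nat.choose_eq_zero_of_lt (by omega)
      rw [e1, e2, e3, e4, e5, Nat.choose_self, Nat.choose_self]
      ring
    · have e1 : (m + 2 - (k' + 1)).choose (k' + 1) = 0 :=
        Nat.choose_eq_zero_of_lt (by omega)
      have e2 : (m + 1 - (k' + 1)).choose (k' + 1) = 0 :=
        Nat.choose_eq_zero_of_lt (by omega)
      have e3 : (m - k').choose k' = 0 := Nat.choose_eq_zero_of_lt (by omega)
      rw [e1, e2, e3]
      ring

lemma t_step (m k : ℕ) :
    t (m + 2) (k + 1) = 2 * t (m + 1) (k + 1) + (X ^ 2 - 1) * t m k := by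
  unfold t
  have thisZ :
      (((m + 2 - (k + 1)).choose (k + 1) * 2 ^ (m + 2 - 2 * (k + 1)) : ℕ) : ℤ[X]) =
        2 * (((m + 1 - (k + 1)).choose (k + 1) * 2 ^ (m + 1 - 2 * (k + 1)) : ℕ) : ℤ[X])
          + (((m - k).choose k * 2 ^ (m - 2 * k) : ℕ) : ℤ[X]) := by
    exact_mod_cast congrArg (Nat.cast : ℕ → ℤ[X]) (coef_rec m k)
  rw [thisZ]
  ring

lemma t_zero_step (m : ℕ) : t (m + 2) 0 = 2 * t (m + 1) 0 := by
  simp only [t, Nat.sub_zero, Nat.mul_zero, Nat.choose_zero_right, pow_zero, one_mul, mul_one]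
  push_cast
  ring

lemma F_rec (m : ℕ) : F (m + 2) = 2 * F (m + 1) + (X ^ 2 - 1) * F m := by
  rw [F_eq_sum (m + 2) (m + 3) (by omega), Finset.sum_range_succ' _ (m + 2)]
  rw [Finset.sum_congr rfl (fun k _ => t_step m k), Finset.sum_add_distrib]
  rw [← Finset.mul_sum, ← Finset.mul_sum, ← F_eq_sum m (m + 2) (by omega)]
  have hF1 : F (m + 1) = (∑ k ∈ range (m + 2), t (m + 1) (k + 1)) + t (m + 1) 0 := by
    rw [F_eq_sum (m + 1) (m + 3) (by omega), Finset.sum_range_succ' _ (m + 2)]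
  rw [hF1, t_zero_step]
  ring

lemma F_zero : F 0 = 1 := by
  simp [F, t]

lemma F_one : F 1 = 2 := by
  rw [F, Finset.sum_range_succ, Finset.sum_range_succ, Finset.sum_range_zero]
  norm_num [t]

lemma G : ∀ m : ℕ, ((X : ℤ[X]) + 1) ^ (m + 1) - (1 - X) ^ (m + 1) = 2 * X * F m := by
  have key : ∀ m : ℕ,
      (((X : ℤ[X]) + 1) ^ (m + 1) - (1 - X) ^ (m + 1) = 2 * X * F m) ∧
      (((X : ℤ[X]) + 1) ^ (m + 2) - (1 - X) ^ (m + 2) = 2 * X * F (m + 1)) := by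
    intro m
    induction m with
    | zero =>
      constructor
      · rw [F_zero]; ring
      · rw [F_one]; ring
    | succ n ih =>
      refine ⟨ih.2, ?_⟩
      have h1 := ih.1
      have h2 := ih.2
      calc ((X : ℤ[X]) + 1) ^ (n + 3) - (1 - X) ^ (n + 3)
          = 2 * (((X : ℤ[X]) + 1) ^ (n + 2) - (1 - X) ^ (n + 2))
            + (X ^ 2 - 1) * (((X : ℤ[X]) + 1) ^ (n + 1) - (1 - X) ^ (n + 1)) := by ring
        _ = 2 * (2 * X * F (n + 1)) + (X ^ 2 - 1) * (2 * X * F n) := by rw [h1, h2]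
        _ = 2 * X * F (n + 2) := by rw [F_rec]; ring
  exact fun m => (key m).1

lemma sum_range_even_odd {M : Type*} [AddCommMonoid M] (f : ℕ → M) (n : ℕ) :
    ∑ i ∈ range (2 * n), f i = ∑ j ∈ range n, (f (2 * j) + f (2 * j + 1)) := by
  induction n with
  | zero => simp
  | succ n ih =>
    rw [show 2 * (n + 1) = (2 * n) + 1 + 1 from by ring, Finset.sum_range_succ,
      Finset.sum_range_succ, ih, Finset.sum_range_succ, add_assoc]

lemma expand_diff (m : ℕ) :
    ((X : ℤ[X]) + 1) ^ m - (1 - X) ^ m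
      = ∑ i ∈ range (m + 1), ((1 - (-1) ^ i) * (m.choose i : ℤ[X])) * X ^ i := by
  have hA : ((X : ℤ[X]) + 1) ^ m = ∑ i ∈ range (m + 1), (m.choose i : ℤ[X]) * X ^ i := by
    rw [add_pow]
    exact Finset.sum_congr rfl fun i _ => by ring
  have hB : ((1 : ℤ[X]) - X) ^ m
      = ∑ i ∈ range (m + 1), ((-1) ^ i * (m.choose i : ℤ[X])) * X ^ i := by
    rw [show ((1 : ℤ[X]) - X) = (-X) + 1 from by ring, add_pow]
    refine Finset.sum_congr rfl fun i _ => ?_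
    rw [neg_pow]
    ring
  rw [hA, hB, ← Finset.sum_sub_distrib]
  exact Finset.sum_congr rfl fun i _ => by ring

lemma odd_side (n : ℕ) :
    ((X : ℤ[X]) + 1) ^ (2 * n + 1) - (1 - X) ^ (2 * n + 1)
      = 2 * X * ∑ j ∈ range (n + 1), (((2 * n + 1).choose (2 * j) : ℤ[X])) * (X ^ 2) ^ (n - j) := by
  rw [expand_diff, show 2 * n + 1 + 1 = 2 * (n + 1) from by ring, sum_range_even_odd]
  rw [Finset.mul_sum, ← Finset.sum_range_reflect]
  refine Finset.sum_congr rfl fun j hj => ?_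
  have hj' : j ≤ n := by simp at hj; omega
  rw [show n + 1 - 1 - j = n - j from by omega]
  have he : ((-1 : ℤ[X]) ^ (2 * (n - j)) : ℤ[X]) = 1 := by
    rw [pow_mul]; norm_num
  have ho : ((-1 : ℤ[X]) ^ (2 * (n - j) + 1) : ℤ[X]) = -1 := by
    rw [pow_succ, pow_mul]; norm_num
  have hc : (2 * n + 1).choose (2 * (n - j) + 1) = (2 * n + 1).choose (2 * j) := by
    rw [show 2 * (n - j) + 1 = 2 * n + 1 - 2 * j from by omega]
    exact Nat.choose_symm (by omega)
  rw [he, ho, hc, show 2 * (n - j) + 1 = 2 * (n - j) + 1 from rfl]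
  rw [show ((X : ℤ[X])) ^ (2 * (n - j) + 1) = X * (X ^ 2) ^ (n - j) from by
    rw [pow_succ, pow_mul]; ring]
  ring

lemma even_side (n : ℕ) :
    ((X : ℤ[X]) + 1) ^ (2 * n + 2) - (1 - X) ^ (2 * n + 2)
      = 2 * X * ∑ j ∈ range (n + 1), (((2 * n + 2).choose (2 * j + 1) : ℤ[X])) * (X ^ 2) ^ (n - j) := by
  rw [expand_diff, show 2 * n + 2 + 1 = 2 * (n + 1) + 1 from by ring, Finset.sum_range_succ,
    sum_range_even_odd]
  have hlast : ((1 - (-1 : ℤ[X]) ^ (2 * (n + 1))) * ((2 * n + 2).choose (2 * (n + 1)) : ℤ[X]))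
      * X ^ (2 * (n + 1)) = 0 := by
    rw [pow_mul]; norm_num
  rw [hlast, add_zero, Finset.mul_sum, ← Finset.sum_range_reflect]
  refine Finset.sum_congr rfl fun j hj => ?_
  have hj' : j ≤ n := by simp at hj; omega
  rw [show n + 1 - 1 - j = n - j from by omega]
  have he : ((-1 : ℤ[X]) ^ (2 * (n - j)) : ℤ[X]) = 1 := by
    rw [pow_mul]; norm_num
  have ho : ((-1 : ℤ[X]) ^ (2 * (n - j) + 1) : ℤ[X]) = -1 := by
    rw [pow_succ, pow_mul]; norm_num
  have hc : (2 * n + 2).choose (2 * (n - j) + 1) = (2 * n + 2).choose (2 * j + 1) := by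
    rw [show 2 * (n - j) + 1 = 2 * n + 2 - (2 * j + 1) from by omega]
    exact Nat.choose_symm (by omega)
  rw [he, ho, hc]
  rw [show ((X : ℤ[X])) ^ (2 * (n - j) + 1) = X * (X ^ 2) ^ (n - j) from by
    rw [pow_succ, pow_mul]; ring]
  ring

lemma comp_inj {p q : ℤ[X]} (h : p.comp (X ^ 2 - 1) = q.comp (X ^ 2 - 1)) : p = q := by
  apply Polynomial.eq_of_infinite_eval_eq
  apply Set.infinite_of_injective_forall_mem (f := fun s : ℕ => (s : ℤ) ^ 2 - 1)
  · intro a b hab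
    simp only at hab
    have h2 : (a : ℤ) ^ 2 = (b : ℤ) ^ 2 := by linarith
    have h3 : ((a ^ 2 : ℕ) : ℤ) = ((b ^ 2 : ℕ) : ℤ) := by push_cast; exact h2
    have h4 : a ^ 2 = b ^ 2 := Nat.cast_injective h3
    nlinarith [h4]
  · intro a
    have := congrArg (Polynomial.eval ((a : ℤ))) h
    simpa [Polynomial.eval_comp] using this

lemma twoX_ne_zero : (2 * X : ℤ[X]) ≠ 0 :=
  mul_ne_zero two_ne_zero X_ne_zero

/-- Generating polynomial of `Qnum n ·`. -/
noncomputable def PQ (n : ℕ) : ℤ[X] :=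
  ∑ j ∈ range (n + 1), (((2 * n + 1).choose (2 * j) : ℤ[X])) * (X + 1) ^ (n - j)

/-- Closed form polynomial for Q. -/
noncomputable def CQ (n : ℕ) : ℤ[X] :=
  ∑ k ∈ range (n + 1), ((4 ^ (n - k) * (2 * n - k).choose k : ℕ) : ℤ[X]) * X ^ k

noncomputable def PR (n : ℕ) : ℤ[X] :=
  ∑ j ∈ range (n + 1), (((2 * n + 2).choose (2 * j + 1) : ℤ[X])) * (X + 1) ^ (n - j)

noncomputable def CR (n : ℕ) : ℤ[X] :=
  ∑ k ∈ range (n + 1), ((2 * 4 ^ (n - k) * (2 * n - k + 1).choose k : ℕ) : ℤ[X]) * X ^ k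

lemma PQ_comp (n : ℕ) :
    (PQ n).comp (X ^ 2 - 1)
      = ∑ j ∈ range (n + 1), (((2 * n + 1).choose (2 * j) : ℤ[X])) * (X ^ 2) ^ (n - j) := by
  rw [PQ, Polynomial.sum_comp]
  refine Finset.sum_congr rfl fun j _ => ?_
  rw [Polynomial.mul_comp, Polynomial.pow_comp, Polynomial.add_comp, Polynomial.X_comp,
    Polynomial.one_comp, Polynomial.natCast_comp, sub_add_cancel]

lemma PR_comp (n : ℕ) :
    (PR n).comp (X ^ 2 - 1)
      = ∑ j ∈ range (n + 1), (((2 * n + 2).choose (2 * j + 1) : ℤ[X])) * (X ^ 2) ^ (n - j) := by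
  rw [PR, Polynomial.sum_comp]
  refine Finset.sum_congr rfl fun j _ => ?_
  rw [Polynomial.mul_comp, Polynomial.pow_comp, Polynomial.add_comp, Polynomial.X_comp,
    Polynomial.one_comp, Polynomial.natCast_comp, sub_add_cancel]

lemma CQ_comp (n : ℕ) : (CQ n).comp (X ^ 2 - 1) = F (2 * n) := by
  rw [CQ, Polynomial.sum_comp, F_eq_sum' (2 * n) (n + 1) (by omega)]
  refine Finset.sum_congr rfl fun k hk => ?_
  have hk' : k ≤ n := by simp at hk; omega
  rw [Polynomial.mul_comp, Polynomial.pow_comp, Polynomial.X_comp, Polynomial.natCast_comp, t]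
  have hnat : (2 * n - k).choose k * 2 ^ (2 * n - 2 * k) = 4 ^ (n - k) * (2 * n - k).choose k := by
    rw [show 2 * n - 2 * k = 2 * (n - k) from by omega, pow_mul]
    norm_num [mul_comm]
  rw [hnat]

lemma CR_comp (n : ℕ) : (CR n).comp (X ^ 2 - 1) = F (2 * n + 1) := by
  rw [CR, Polynomial.sum_comp, F_eq_sum' (2 * n + 1) (n + 1) (by omega)]
  refine Finset.sum_congr rfl fun k hk => ?_
  have hk' : k ≤ n := by simp at hk; omega
  rw [Polynomial.mul_comp, Polynomial.pow_comp, Polynomial.X_comp, Polynomial.natCast_comp, t]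
  have hnat : (2 * n + 1 - k).choose k * 2 ^ (2 * n + 1 - 2 * k)
      = 2 * 4 ^ (n - k) * (2 * n - k + 1).choose k := by
    rw [show 2 * n + 1 - k = 2 * n - k + 1 from by omega,
      show 2 * n + 1 - 2 * k = 2 * (n - k) + 1 from by omega, pow_succ, pow_mul]
    norm_num
    ring
  rw [hnat]

lemma PQ_eq_CQ (n : ℕ) : PQ n = CQ n := by
  apply comp_inj
  rw [PQ_comp, CQ_comp]
  apply mul_left_cancel₀ twoX_ne_zero
  rw [← odd_side n, ← G (2 * n)]

lemma PR_eq_CR (n : ℕ) : PR n = CR n := by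
  apply comp_inj
  rw [PR_comp, CR_comp]
  apply mul_left_cancel₀ twoX_ne_zero
  rw [← even_side n, ← G (2 * n + 1)]

lemma PQ_coeff (n k : ℕ) : (PQ n).coeff k = (Qnum n k : ℤ) := by
  rw [PQ, finset_sum_coeff]
  have h1 : ∀ j ∈ range (n + 1),
      ((((2 * n + 1).choose (2 * j) : ℤ[X])) * (X + 1) ^ (n - j)).coeff k
        = (((2 * n + 1).choose (2 * j) * (n - j).choose k : ℕ) : ℤ) := by
    intro j _
    rw [coeff_natCast_mul, coeff_X_add_one_pow]
    push_cast
    ring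
  rw [Finset.sum_congr rfl h1, ← Nat.cast_sum]
  congr 1
  rw [Qnum]
  symm
  apply Finset.sum_subset (Finset.range_subset_range.2 (by omega))
  intro x hx1 hx
  have : (n - x).choose k = 0 :=
    Nat.choose_eq_zero_of_lt (by simp at hx1 hx; omega)
  simp [this]

lemma PR_coeff (n k : ℕ) : (PR n).coeff k = (Rnum n k : ℤ) := by
  rw [PR, finset_sum_coeff]
  have h1 : ∀ j ∈ range (n + 1),
      ((((2 * n + 2).choose (2 * j + 1) : ℤ[X])) * (X + 1) ^ (n - j)).coeff k
        = (((2 * n + 2).choose (2 * j + 1) * (n - j).choose k : ℕ) : ℤ) := by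
    intro j _
    rw [coeff_natCast_mul, coeff_X_add_one_pow]
    push_cast
    ring
  rw [Finset.sum_congr rfl h1, ← Nat.cast_sum]
  congr 1
  rw [Rnum]
  symm
  apply Finset.sum_subset (Finset.range_subset_range.2 (by omega))
  intro x hx1 hx
  have : (n - x).choose k = 0 :=
    Nat.choose_eq_zero_of_lt (by simp at hx1 hx; omega)
  simp [this]

lemma CQ_coeff (n k : ℕ) (hk : k ≤ n) :
    (CQ n).coeff k = ((4 ^ (n - k) * (2 * n - k).choose k : ℕ) : ℤ) := by
  rw [CQ, finset_sum_coeff]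
  rw [Finset.sum_congr rfl (fun i _ => by
    rw [coeff_natCast_mul, Polynomial.coeff_X_pow])]
  simp only [mul_ite, mul_one, mul_zero]
  rw [Finset.sum_ite_eq (range (n + 1)) k]
  simp [Nat.lt_succ_iff.2 hk]

lemma CR_coeff (n k : ℕ) (hk : k ≤ n) :
    (CR n).coeff k = ((2 * 4 ^ (n - k) * (2 * n - k + 1).choose k : ℕ) : ℤ) := by
  rw [CR, finset_sum_coeff]
  rw [Finset.sum_congr rfl (fun i _ => by
    rw [coeff_natCast_mul, Polynomial.coeff_X_pow])]
  simp only [mul_ite, mul_one, mul_zero]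
  rw [Finset.sum_ite_eq (range (n + 1)) k]
  simp [Nat.lt_succ_iff.2 hk]

end QRAux

theorem Q_and_R_closed_forms (n k : ℕ) (hk : k ≤ n) :
    Qnum n k = 4 ^ (n - k) * Nat.choose (2 * n - k) k ∧
    Rnum n k = 2 * 4 ^ (n - k) * Nat.choose (2 * n - k + 1) k := by
  constructor
  · have h := congrArg (fun p => Polynomial.coeff p k) (QRAux.PQ_eq_CQ n)
    rw [QRAux.PQ_coeff, QRAux.CQ_coeff n k hk] at h
    exact_mod_cast h
  · have h := congrArg (fun p => Polynomial.coeff p k) (QRAux.PR_eq_CR n)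
    rw [QRAux.PR_coeff, QRAux.CR_coeff n k hk] at h
    exact_mod_cast h
end

section
/- For the Margolus-diffusion Markov chain with parameter p ∈ (0,1) and symmetric initial condition, the second conditional moments satisfy μ_t^{(2)+} = μ_t^{(2)−} = (p²/(4(1−p)²))·(−1 + (2(1−p)/p)·t + (2p−1)^t), where μ_t^{(2)±} = ∑_{x∈ℤ} x² P_t(x, ±1). -/
theorem margolus_chain_second_conditional_moments
    (p : ℝ) (hp0 : 0 < p) (hp1 : p < 1)
    (P : ℕ → ℤ → ℤ → ℝ)
    (hinit : ∀ x : ℤ,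
      P 0 x 1 = (if x = 0 then (1 : ℝ) / 2 else 0) ∧
      P 0 x (-1) = (if x = 0 then (1 : ℝ) / 2 else 0))
    (hrec : ∀ (t : ℕ) (x d : ℤ), d = 1 ∨ d = -1 →
      P (t + 1) x d = p * P t (x - d) d + (1 - p) * P t x (-d)) :
    ∀ t : ℕ,
      (∑' x : ℤ, (x : ℝ) ^ 2 * P t x 1)
          = p ^ 2 / (4 * (1 - p) ^ 2) *
              (-1 + 2 * (1 - p) / p * t + (2 * p - 1) ^ t) ∧
      (∑' x : ℤ, (x : ℝ) ^ 2 * P t x (-1))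
          = p ^ 2 / (4 * (1 - p) ^ 2) *
              (-1 + 2 * (1 - p) / p * t + (2 * p - 1) ^ t) := by
  have hp1' : (1 : ℝ) - p ≠ 0 := by linarith
  have hp0' : p ≠ 0 := ne_of_gt hp0
  -- support lemma
  have hsupp : ∀ t : ℕ, ∀ x d : ℤ, (d = 1 ∨ d = -1) →
      ((t : ℤ) < x ∨ x < -(t : ℤ)) → P t x d = 0 := by
    intro t
    induction t with
    | zero =>
      intro x d hd hx
      have hx0 : x ≠ 0 := by omega
      rcases hd with rfl | rfl
      · rw [(hinit x).1]; simp [hx0]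
      · rw [(hinit x).2]; simp [hx0]
    | succ t ih =>
      intro x d hd hx
      have hd' : -d = 1 ∨ -d = -1 := by rcases hd with rfl | rfl <;> simp
      rw [hrec t x d hd]
      have h1 : P t (x - d) d = 0 := by
        apply ih _ _ hd
        rcases hd with rfl | rfl <;> push_cast at hx ⊢ <;> omega
      have h2 : P t x (-d) = 0 := by
        apply ih _ _ hd'
        push_cast at hx ⊢
        omega
      rw [h1, h2]; ring
  -- summability (shifted version)
  have hsummable : ∀ (t : ℕ) (d c : ℤ), (d = 1 ∨ d = -1) → ∀ f : ℤ → ℝ,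
      Summable (fun x : ℤ => f x * P t (x - c) d) := by
    intro t d c hd f
    apply summable_of_ne_finset_zero (s := Finset.Icc (-(t : ℤ) + c) ((t : ℤ) + c))
    intro x hx
    simp only [Finset.mem_Icc, not_and_or, not_le] at hx
    have h0 : P t (x - c) d = 0 := hsupp t _ d hd (by omega)
    rw [h0, mul_zero]
  have hS : ∀ (t : ℕ) (d : ℤ), (d = 1 ∨ d = -1) → ∀ f : ℤ → ℝ,
      Summable (fun x : ℤ => f x * P t x d) := by
    intro t d hd f
    have := hsummable t d 0 hd f
    simpa using this
  have hS1 : ∀ (t : ℕ) (d : ℤ), (d = 1 ∨ d = -1) →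
      Summable (fun x : ℤ => P t x d) := by
    intro t d hd
    have := hS t d hd (fun _ => (1 : ℝ))
    simpa using this
  -- step lemma for weighted sums
  have hstepf : ∀ (t : ℕ) (d : ℤ), (d = 1 ∨ d = -1) → ∀ f : ℝ → ℝ,
      (∑' x : ℤ, f (x : ℝ) * P (t + 1) x d)
        = p * (∑' x : ℤ, f ((x : ℝ) + (d : ℝ)) * P t x d)
          + (1 - p) * (∑' x : ℤ, f (x : ℝ) * P t x (-d)) := by
    intro t d hd f
    have hd' : -d = 1 ∨ -d = -1 := by rcases hd with rfl | rfl <;> simp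
    have e1 : (∑' x : ℤ, f (x : ℝ) * P (t + 1) x d)
        = ∑' x : ℤ, (p * (f (x : ℝ) * P t (x - d) d)
            + (1 - p) * (f (x : ℝ) * P t x (-d))) := by
      apply tsum_congr; intro x; rw [hrec t x d hd]; ring
    rw [e1, Summable.tsum_add ((hsummable t d d hd _).mul_left p)
        ((hS t (-d) hd' _).mul_left (1 - p)), tsum_mul_left, tsum_mul_left]
    congr 2
    have h := (Equiv.addRight d).tsum_eq (fun x : ℤ => f (x : ℝ) * P t (x - d) d)
    simp only [Equiv.coe_addRight, add_sub_cancel_right, Int.cast_add] at h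
    rw [← h]
  -- expansion lemmas
  have hexp1 : ∀ (t : ℕ) (d : ℤ), (d = 1 ∨ d = -1) →
      (∑' x : ℤ, ((x : ℝ) + (d : ℝ)) * P t x d)
        = (∑' x : ℤ, (x : ℝ) * P t x d) + (d : ℝ) * (∑' x : ℤ, P t x d) := by
    intro t d hd
    have e : (fun x : ℤ => ((x : ℝ) + (d : ℝ)) * P t x d)
        = fun x : ℤ => ((x : ℝ) * P t x d) + (d : ℝ) * P t x d := by
      funext x; ring
    rw [e, Summable.tsum_add (hS t d hd _) ((hS1 t d hd).mul_left _), tsum_mul_left]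
  have hexp2 : ∀ (t : ℕ) (d : ℤ), (d = 1 ∨ d = -1) →
      (∑' x : ℤ, ((x : ℝ) + (d : ℝ)) ^ 2 * P t x d)
        = (∑' x : ℤ, (x : ℝ) ^ 2 * P t x d)
          + 2 * (d : ℝ) * (∑' x : ℤ, (x : ℝ) * P t x d)
          + (d : ℝ) ^ 2 * (∑' x : ℤ, P t x d) := by
    intro t d hd
    have e : (fun x : ℤ => ((x : ℝ) + (d : ℝ)) ^ 2 * P t x d)
        = fun x : ℤ => (((x : ℝ) ^ 2 * P t x d)
            + (2 * (d : ℝ)) * ((x : ℝ) * P t x d)) + ((d : ℝ) ^ 2) * P t x d := by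
      funext x; ring
    rw [e, Summable.tsum_add ((hS t d hd _).add ((hS t d hd _).mul_left _))
        ((hS1 t d hd).mul_left _),
      Summable.tsum_add (hS t d hd _) ((hS t d hd _).mul_left _), tsum_mul_left, tsum_mul_left]
  -- main induction
  have key : ∀ t : ℕ,
      (∑' x : ℤ, P t x 1) = 1 / 2 ∧ (∑' x : ℤ, P t x (-1)) = 1 / 2 ∧
      (∑' x : ℤ, (x : ℝ) * P t x 1) = p * (1 - (2 * p - 1) ^ t) / (4 * (1 - p)) ∧
      (∑' x : ℤ, (x : ℝ) * P t x (-1)) = -(p * (1 - (2 * p - 1) ^ t) / (4 * (1 - p))) ∧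
      (∑' x : ℤ, (x : ℝ) ^ 2 * P t x 1)
          = p ^ 2 / (4 * (1 - p) ^ 2) * (-1 + 2 * (1 - p) / p * t + (2 * p - 1) ^ t) ∧
      (∑' x : ℤ, (x : ℝ) ^ 2 * P t x (-1))
          = p ^ 2 / (4 * (1 - p) ^ 2) * (-1 + 2 * (1 - p) / p * t + (2 * p - 1) ^ t) := by
    intro t
    induction t with
    | zero =>
      have e0p : (∑' x : ℤ, P 0 x 1) = P 0 0 1 :=
        tsum_eq_single 0 (fun b hb => by rw [(hinit b).1]; simp [hb])
      have e0m : (∑' x : ℤ, P 0 x (-1)) = P 0 0 (-1) :=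
        tsum_eq_single 0 (fun b hb => by rw [(hinit b).2]; simp [hb])
      have e1p : (∑' x : ℤ, (x : ℝ) * P 0 x 1) = (0 : ℝ) := by
        rw [tsum_eq_single 0 (fun b hb => by rw [(hinit b).1]; simp [hb])]
        simp
      have e1m : (∑' x : ℤ, (x : ℝ) * P 0 x (-1)) = (0 : ℝ) := by
        rw [tsum_eq_single 0 (fun b hb => by rw [(hinit b).2]; simp [hb])]
        simp
      have e2p : (∑' x : ℤ, (x : ℝ) ^ 2 * P 0 x 1) = (0 : ℝ) := by
        rw [tsum_eq_single 0 (fun b hb => by rw [(hinit b).1]; simp [hb])]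
        simp
      have e2m : (∑' x : ℤ, (x : ℝ) ^ 2 * P 0 x (-1)) = (0 : ℝ) := by
        rw [tsum_eq_single 0 (fun b hb => by rw [(hinit b).2]; simp [hb])]
        simp
      rw [e0p, e0m, e1p, e1m, e2p, e2m, (hinit 0).1, (hinit 0).2]
      norm_num
    | succ t ih =>
      obtain ⟨h0p, h0m, h1p, h1m, h2p, h2m⟩ := ih
      have hd1 : (1 : ℤ) = 1 ∨ (1 : ℤ) = -1 := Or.inl rfl
      have hdm : (-1 : ℤ) = 1 ∨ (-1 : ℤ) = -1 := Or.inr rfl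
      -- zeroth moments
      have s0p := hstepf t 1 hd1 (fun _ => (1 : ℝ))
      have s0m := hstepf t (-1) hdm (fun _ => (1 : ℝ))
      simp only [one_mul, neg_neg] at s0p s0m
      -- first moments
      have s1p := hstepf t 1 hd1 (fun y => y)
      have s1m := hstepf t (-1) hdm (fun y => y)
      simp only [neg_neg] at s1p s1m
      rw [hexp1 t 1 hd1] at s1p
      rw [hexp1 t (-1) hdm] at s1m
      -- second moments
      have s2p := hstepf t 1 hd1 (fun y => y ^ 2)
      have s2m := hstepf t (-1) hdm (fun y => y ^ 2)
      simp only [neg_neg] at s2p s2m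
      rw [hexp2 t 1 hd1] at s2p
      rw [hexp2 t (-1) hdm] at s2m
      simp only [h0p, h0m, h1p, h1m, h2p, h2m] at s0p s0m s1p s1m s2p s2m
      push_cast at s0p s0m s1p s1m s2p s2m ⊢
      refine ⟨by rw [s0p]; ring, by rw [s0m]; ring, by rw [s1p]; field_simp; ring,
        by rw [s1m]; field_simp; ring, by rw [s2p]; field_simp; ring,
        by rw [s2m]; field_simp; ring⟩
  intro t
  exact ⟨(key t).2.2.2.2.1, (key t).2.2.2.2.2⟩
end
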